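/- arXiv:1102.4869 — 4 statements merged into one kernel-verified Lean document; each statement's English description precedes it below -/
import Mathlib

section
/- Let A be the Fell C*-algebra of a continuous Hilbert bundle (T, {H_t}_{t∈T}, Ω) over a locally compact Hausdorff space T, and let I be an ideal of A. Then the triple (βX^I, {H_t^I}_{t∈βX^I}, Ω^I) is a continuous Hilbert bundle over the compact Hausdorff space βX^I; that is, Ω^I satisfies axioms (I)–(IV) with respect to the fibres H_t^I. -/
/- Common definitions: continuous Hilbert bundles and Fell (spatial continuous
trace) C*-algebras, following Fell (1961). -/

noncomputable section

/-- A vector field `ξ` is a local uniform limit of members of `S`. -/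
def LocUnifApprox {T : Type*} [TopologicalSpace T] {H : T → Type*}
    [∀ t, NormedAddCommGroup (H t)] (S : Set (∀ t, H t)) (ξ : ∀ t, H t) : Prop :=
  ∀ (t₀ : T) (ε : ℝ), 0 < ε → ∃ U : Set T, IsOpen U ∧ t₀ ∈ U ∧
    ∃ ω ∈ S, ∀ t ∈ U, ‖ω t - ξ t‖ < ε

/-- Axioms (I)-(IV) of a continuous Hilbert bundle `(T, {H t}, Ω)`. -/
structure IsCtsHilbertBundle {T : Type*} [TopologicalSpace T] {H : T → Type*}
    [∀ t, NormedAddCommGroup (H t)] [∀ t, InnerProductSpace ℂ (H t)]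
    (Ω : Set (∀ t, H t)) : Prop where
  /-- axiom (I): `Ω` is a `C(T)`-module (additive part) -/
  zero_mem : (fun t => (0 : H t)) ∈ Ω
  add_mem : ∀ ω ∈ Ω, ∀ ν ∈ Ω, (fun t => ω t + ν t) ∈ Ω
  /-- axiom (I): `C(T)`-action -/
  smul_mem : ∀ (f : C(T, ℂ)), ∀ ω ∈ Ω, (fun t => f t • ω t) ∈ Ω
  /-- axiom (II) -/
  full : ∀ (t : T) (v : H t), ∃ ω ∈ Ω, ω t = v
  /-- axiom (III) -/
  norm_continuous : ∀ ω ∈ Ω, Continuous fun t => ‖ω t‖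
  /-- axiom (IV) -/
  closed_locUnif : ∀ ξ : ∀ t, H t, LocUnifApprox Ω ξ → ξ ∈ Ω

variable {T : Type*} [TopologicalSpace T] {H : T → Type*}
  [∀ t, NormedAddCommGroup (H t)] [∀ t, InnerProductSpace ℂ (H t)]
  [∀ t, CompleteSpace (H t)]

/-- An operator field is weakly continuous w.r.t. the bundle `Ω`. -/
def WeaklyCts (Ω : Set (∀ t, H t)) (a : ∀ t, H t →L[ℂ] H t) : Prop :=
  ∀ ω₁ ∈ Ω, ∀ ω₂ ∈ Ω, Continuous fun t => (inner ℂ (a t (ω₁ t)) (ω₂ t) : ℂ)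

/-- An operator field is almost finite-dimensional w.r.t. the bundle `Ω`. -/
def AlmostFinDim (Ω : Set (∀ t, H t)) (a : ∀ t, H t →L[ℂ] H t) : Prop :=
  ∀ (t₀ : T) (ε : ℝ), 0 < ε → ∃ U : Set T, IsOpen U ∧ t₀ ∈ U ∧
    ∃ (n : ℕ) (ω : Fin n → ∀ t, H t), (∀ i, ω i ∈ Ω) ∧ ∀ t ∈ U,
      LinearIndependent ℂ (fun i => ω i t) ∧
      ∃ p : H t →L[ℂ] H t, IsIdempotentElem p ∧ IsSelfAdjoint p ∧
        LinearMap.range (p : H t →ₗ[ℂ] H t) = Submodule.span ℂ (Set.range fun i => ω i t) ∧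
        ‖p * a t * p - a t‖ < ε

/-- The Fell (spatial continuous-trace) C*-algebra `A(T, {H t}, Ω)`: all weakly
continuous, almost finite-dimensional operator fields whose pointwise norm
function lies in `C₀(T)`; a set of operator fields with pointwise operations. -/
def FellAlgebra (Ω : Set (∀ t, H t)) : Set (∀ t, H t →L[ℂ] H t) :=
  {a | WeaklyCts Ω a ∧ AlmostFinDim Ω a ∧ (Continuous fun t => ‖a t‖) ∧
    Filter.Tendsto (fun t => ‖a t‖) (Filter.cocompact T) (nhds 0)}

/-- `I` is a (closed, two-sided, star) ideal of the C*-algebra of operator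
fields `A` (with pointwise operations and supremum norm). -/
structure IsIdealOf (A I : Set (∀ t, H t →L[ℂ] H t)) : Prop where
  subset : I ⊆ A
  zero_mem : (0 : ∀ t, H t →L[ℂ] H t) ∈ I
  add_mem : ∀ a ∈ I, ∀ b ∈ I, a + b ∈ I
  smul_mem : ∀ (c : ℂ), ∀ a ∈ I, c • a ∈ I
  star_mem : ∀ a ∈ I, star a ∈ I
  mul_mem_left : ∀ a ∈ A, ∀ b ∈ I, a * b ∈ I
  mul_mem_right : ∀ a ∈ I, ∀ b ∈ A, a * b ∈ I
  norm_closed : ∀ a ∈ A, (∀ ε : ℝ, 0 < ε → ∃ b ∈ I, ∀ t, ‖a t - b t‖ < ε) → a ∈ I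

/-- `I` is an essential ideal of `A`: it has nonzero intersection with every
nonzero ideal of `A`. -/
def IsEssentialIdealOf (A I : Set (∀ t, H t →L[ℂ] H t)) : Prop :=
  IsIdealOf A I ∧
    ∀ J, IsIdealOf A J → (∃ b ∈ J, b ≠ 0) → ∃ c, c ∈ I ∧ c ∈ J ∧ c ≠ 0

/-- The open set `X^I ⊆ T` associated with an ideal `I`
(the complement of `Z^I = {t | b t = 0 ∀ b ∈ I}`). -/
def idealSupp (I : Set (∀ t, H t →L[ℂ] H t)) : Set T :=
  {t | ∃ b ∈ I, b t ≠ 0}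

/-- `Ω_b`: the bounded vector fields of the bundle. -/
def boundedFields (Ω : Set (∀ t, H t)) : Set (∀ t, H t) :=
  {ω | ω ∈ Ω ∧ ∃ M : ℝ, ∀ t, ‖ω t‖ ≤ M}

/-- The rank-one operator field `Θ_{ω,ν} : ξ ↦ ⟨ξ, ν⟩·ω` (inner product linear
in `ξ`, conjugate-linear in `ν`). -/
def rankOneField (ω ν : ∀ t, H t) : ∀ t, H t →L[ℂ] H t :=
  fun t => (innerSL ℂ (ν t)).smulRight (ω t)

/-- `F(S)`: finite sums of rank-one fields `Θ_{ω,ν}` with `ω, ν ∈ S`. -/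
def finRankFields (S : Set (∀ t, H t)) : Set (∀ t, H t →L[ℂ] H t) :=
  {a | ∃ (n : ℕ) (ω ν : Fin n → ∀ t, H t), (∀ i, ω i ∈ S) ∧ (∀ i, ν i ∈ S) ∧
    a = fun t => ∑ i, rankOneField (ω i) (ν i) t}

/-- An operator field `x` is strictly continuous with respect to a family `F`
of operator fields. -/
def StrictlyCts (F : Set (∀ t, H t →L[ℂ] H t)) (x : ∀ t, H t →L[ℂ] H t) : Prop :=
  ∀ (t₀ : T), ∀ a ∈ F, ∀ ε : ℝ, 0 < ε → ∃ U : Set T, IsOpen U ∧ t₀ ∈ U ∧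
    ∃ b ∈ F, ∀ t ∈ U, ‖(x t - b t) * a t‖ + ‖a t * (x t - b t)‖ < ε

/-- The concrete realisation (Akemann–Pedersen–Tomiyama) of the multiplier
algebra: bounded operator fields, strictly continuous w.r.t. `F`. -/
def MultSet (F : Set (∀ t, H t →L[ℂ] H t)) : Set (∀ t, H t →L[ℂ] H t) :=
  {x | (∃ C : ℝ, ∀ t, ‖x t‖ ≤ C) ∧ StrictlyCts F x}

/-- Conjugation of an operator by a unitary (linear isometric equivalence). -/
def conjCLM {E F : Type*} [NormedAddCommGroup E] [NormedAddCommGroup F]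
    [NormedSpace ℂ E] [NormedSpace ℂ F] (e : E ≃ₗᵢ[ℂ] F) (x : E →L[ℂ] E) :
    F →L[ℂ] F :=
  ((e.toContinuousLinearEquiv : E →L[ℂ] F).comp x).comp
    (e.symm.toContinuousLinearEquiv : F →L[ℂ] E)

end

/- The local-uniform closure of any submodule `S` of vector fields with continuous norms and
dense values in every fibre is a continuous Hilbert bundle; here `S = {ω̄ : ω ∈ Ω_b}`, whose
norms are continuous because the extended inner products are. Closure under local uniform limits
is transitivity of approximation, norms stay continuous as locally uniform limits, and near `u₀`
the field `f • ν` is uniformly close to `f u₀ • ν`. For fullness at `u`, approximate `v` by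
`ωₙ(u)` within `2⁻ⁿ`: the differences `ωₙ₊₁ - ωₙ`, radially truncated to norm `2 · 2⁻ⁿ` (which
leaves them unchanged at `u`), sum uniformly to a field of the closure with value `v - ω₀(u)`. -/

open Filter Topology

section LocUnifApprox

variable {X : Type*} [TopologicalSpace X] {F : X → Type*} [∀ x, NormedAddCommGroup (F x)]
  {S : Set (∀ x, F x)} {ξ : ∀ x, F x}

theorem LocUnifApprox.of_mem (h : ξ ∈ S) : LocUnifApprox S ξ :=
  fun _ ε hε => ⟨Set.univ, isOpen_univ, trivial, ξ, h, fun x _ => by simpa using hε⟩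

theorem LocUnifApprox.of_locUnifApprox (h : LocUnifApprox {ν | LocUnifApprox S ν} ξ) :
    LocUnifApprox S ξ := by
  intro x₀ ε hε
  obtain ⟨U, hU, hx₀U, ν, hν, hνξ⟩ := h x₀ (ε / 2) (half_pos hε)
  obtain ⟨V, hV, hx₀V, ω, hω, hων⟩ := hν x₀ (ε / 2) (half_pos hε)
  refine ⟨U ∩ V, hU.inter hV, ⟨hx₀U, hx₀V⟩, ω, hω, fun x hx => ?_⟩
  calc ‖ω x - ξ x‖ ≤ ‖ω x - ν x‖ + ‖ν x - ξ x‖ := norm_sub_le_norm_sub_add_norm_sub _ _ _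
    _ < ε / 2 + ε / 2 := add_lt_add (hων x hx.2) (hνξ x hx.1)
    _ = ε := add_halves ε

theorem LocUnifApprox.continuous_norm (hS : ∀ ω ∈ S, Continuous fun x => ‖ω x‖)
    (h : LocUnifApprox S ξ) : Continuous fun x => ‖ξ x‖ :=
  continuous_of_locally_uniform_approx_of_continuousAt fun x₀ u hu => by
    obtain ⟨ε, hε, hεu⟩ := Metric.mem_uniformity_dist.1 hu
    obtain ⟨U, hU, hx₀U, ω, hω, hωξ⟩ := h x₀ ε hε
    refine ⟨U, hU.mem_nhds hx₀U, fun x => ‖ω x‖, (hS ω hω).continuousAt, fun x hx => hεu ?_⟩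
    rw [Real.dist_eq, abs_sub_comm]
    exact (abs_norm_sub_norm_le _ _).trans_lt (hωξ x hx)

end LocUnifApprox

namespace Submodule

section NormedField

variable {X : Type*} [TopologicalSpace X] {F : X → Type*} [∀ x, NormedAddCommGroup (F x)]
  {𝕜 : Type*} [NormedField 𝕜] [∀ x, NormedSpace 𝕜 (F x)]

def locUnifClosure (S : Submodule 𝕜 (∀ x, F x)) : Submodule 𝕜 (∀ x, F x) where
  carrier := {ξ | LocUnifApprox (S : Set (∀ x, F x)) ξ}
  zero_mem' := .of_mem S.zero_mem
  add_mem' := by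
    intro ξ η hξ hη x₀ ε hε
    obtain ⟨U, hU, hx₀U, ω, hω, hωξ⟩ := hξ x₀ (ε / 2) (half_pos hε)
    obtain ⟨V, hV, hx₀V, ν, hν, hνη⟩ := hη x₀ (ε / 2) (half_pos hε)
    refine ⟨U ∩ V, hU.inter hV, ⟨hx₀U, hx₀V⟩, ω + ν, S.add_mem hω hν, fun x hx => ?_⟩
    calc ‖(ω + ν) x - (ξ + η) x‖ = ‖(ω x - ξ x) + (ν x - η x)‖ := by
          rw [Pi.add_apply, Pi.add_apply, add_sub_add_comm]
      _ ≤ ‖ω x - ξ x‖ + ‖ν x - η x‖ := norm_add_le _ _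
      _ < ε / 2 + ε / 2 := add_lt_add (hωξ x hx.1) (hνη x hx.2)
      _ = ε := add_halves ε
  smul_mem' := by
    intro c ξ hξ x₀ ε hε
    obtain ⟨U, hU, hx₀U, ω, hω, hωξ⟩ := hξ x₀ (ε / (‖c‖ + 1)) (by positivity)
    refine ⟨U, hU, hx₀U, c • ω, S.smul_mem c hω, fun x hx => ?_⟩
    calc ‖(c • ω) x - (c • ξ) x‖ = ‖c‖ * ‖ω x - ξ x‖ := by
          rw [Pi.smul_apply, Pi.smul_apply, ← smul_sub, norm_smul]
      _ ≤ (‖c‖ + 1) * ‖ω x - ξ x‖ := by gcongr; linarith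
      _ < (‖c‖ + 1) * (ε / (‖c‖ + 1)) := by gcongr; exact hωξ x hx
      _ = ε := by field_simp

variable {S : Submodule 𝕜 (∀ x, F x)} {ξ : ∀ x, F x}

theorem le_locUnifClosure : S ≤ S.locUnifClosure := fun _ => .of_mem

theorem mem_locUnifClosure_of_locUnifApprox
    (h : LocUnifApprox (S.locUnifClosure : Set (∀ x, F x)) ξ) : ξ ∈ S.locUnifClosure :=
  .of_locUnifApprox h

theorem smul_mem_locUnifClosure (hS : ∀ ω ∈ S, Continuous fun x => ‖ω x‖) (f : C(X, 𝕜))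
    (hξ : ξ ∈ S.locUnifClosure) : (fun x => f x • ξ x) ∈ S.locUnifClosure := by
  refine mem_locUnifClosure_of_locUnifApprox fun x₀ ε hε => ?_
  set M := ‖ξ x₀‖ + 1
  have hM : 0 < M := by positivity
  have hV : IsOpen {x | ‖ξ x‖ < M} := isOpen_lt (hξ.continuous_norm hS) continuous_const
  have hW : IsOpen {x | ‖f x₀ - f x‖ < ε / M} := isOpen_lt (by fun_prop) continuous_const
  have hx₀ : x₀ ∈ {x | ‖ξ x‖ < M} ∩ {x | ‖f x₀ - f x‖ < ε / M} :=
    ⟨show ‖ξ x₀‖ < M from lt_add_one _, by simpa using div_pos hε hM⟩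
  refine ⟨_, hV.inter hW, hx₀, f x₀ • ξ, smul_mem _ _ hξ, fun x ⟨hxV, hxW⟩ => ?_⟩
  calc ‖(f x₀ • ξ) x - f x • ξ x‖ = ‖f x₀ - f x‖ * ‖ξ x‖ := by
        rw [Pi.smul_apply, ← sub_smul, norm_smul]
    _ ≤ ‖f x₀ - f x‖ * M := by gcongr; exact hxV.le
    _ < ε / M * M := by gcongr; exact hxW
    _ = ε := div_mul_cancel₀ ε hM.ne'

theorem tsum_mem_locUnifClosure [∀ x, CompleteSpace (F x)] {g : ℕ → ∀ x, F x} {b : ℕ → ℝ}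
    (hg : ∀ n, g n ∈ S.locUnifClosure) (hb : Summable b) (hgb : ∀ n x, ‖g n x‖ ≤ b n) :
    (fun x => ∑' n, g n x) ∈ S.locUnifClosure := by
  refine mem_locUnifClosure_of_locUnifApprox fun x₀ ε hε => ?_
  obtain ⟨N, hN⟩ := ((tendsto_sum_nat_add b).eventually (gt_mem_nhds hε)).exists
  refine ⟨Set.univ, isOpen_univ, trivial, ∑ n ∈ Finset.range N, g n,
    sum_mem fun n _ => hg n, fun x _ => ?_⟩
  have hsum : Summable fun n => g n x := .of_norm_bounded hb (hgb · x)
  rw [Finset.sum_apply, ← hsum.sum_add_tsum_nat_add N, sub_add_cancel_left, norm_neg]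
  calc ‖∑' n, g (n + N) x‖ ≤ ∑' n, b (n + N) :=
        tsum_of_norm_bounded ((summable_nat_add_iff N).2 hb).hasSum fun n => hgb _ x
    _ < ε := hN

end NormedField

section RCLike

variable {X : Type*} [TopologicalSpace X] {F : X → Type*} [∀ x, NormedAddCommGroup (F x)]
  {𝕜 : Type*} [RCLike 𝕜] [∀ x, NormedSpace 𝕜 (F x)]
  {S : Submodule 𝕜 (∀ x, F x)} {ξ : ∀ x, F x}

theorem exists_norm_le_of_mem_locUnifClosure (hS : ∀ ω ∈ S, Continuous fun x => ‖ω x‖)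
    (hξ : ξ ∈ S.locUnifClosure) {c : ℝ} (hc : 0 < c) {x₀ : X} (hξx₀ : ‖ξ x₀‖ ≤ c) :
    ∃ η ∈ S.locUnifClosure, (∀ x, ‖η x‖ ≤ c) ∧ η x₀ = ξ x₀ := by
  have hmax : ∀ x, 0 < max c ‖ξ x‖ := fun x => hc.trans_le (le_max_left _ _)
  let r : C(X, 𝕜) := ⟨fun x => ((c / max c ‖ξ x‖ : ℝ) : 𝕜),
    RCLike.continuous_ofReal.comp <| continuous_const.div
      (continuous_const.max (hξ.continuous_norm hS)) fun x => (hmax x).ne'⟩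
  refine ⟨fun x => r x • ξ x, smul_mem_locUnifClosure hS r hξ, fun x => ?_, ?_⟩
  · calc ‖r x • ξ x‖ = c / max c ‖ξ x‖ * ‖ξ x‖ := by
          change ‖((c / max c ‖ξ x‖ : ℝ) : 𝕜) • ξ x‖ = _
          rw [norm_smul, RCLike.norm_ofReal, abs_of_pos (div_pos hc (hmax x))]
      _ ≤ c / max c ‖ξ x‖ * max c ‖ξ x‖ := by gcongr; exact le_max_right _ _
      _ = c := div_mul_cancel₀ c (hmax x).ne'
  · simp [r, max_eq_left hξx₀, hc.ne']

theorem exists_mem_locUnifClosure_apply_eq [∀ x, CompleteSpace (F x)]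
    (hS : ∀ ω ∈ S, Continuous fun x => ‖ω x‖) {x₀ : X}
    (hdense : ∀ (v : F x₀) (ε : ℝ), 0 < ε → ∃ ω ∈ S, ‖ω x₀ - v‖ < ε) (v : F x₀) :
    ∃ ξ ∈ S.locUnifClosure, ξ x₀ = v := by
  choose ω hωS hωv using fun n : ℕ => hdense v ((1 / 2) ^ n) (by positivity)
  have hstep : ∀ n, ‖(ω (n + 1) - ω n) x₀‖ ≤ 2 * (1 / 2) ^ n := fun n => by
    have := norm_sub_le_norm_sub_add_norm_sub (ω (n + 1) x₀) v (ω n x₀)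
    rw [norm_sub_rev v] at this
    rw [Pi.sub_apply]
    have hpow : (0 : ℝ) ≤ (1 / 2) ^ n := by positivity
    linarith [hωv (n + 1), hωv n, pow_succ (1 / 2 : ℝ) n]
  choose η hη hηb hηx₀ using fun n => exists_norm_le_of_mem_locUnifClosure hS
    (le_locUnifClosure (sub_mem (hωS (n + 1)) (hωS n))) (by positivity) (hstep n)
  refine ⟨ω 0 + fun x => ∑' n, η n x, add_mem (le_locUnifClosure (hωS 0))
    (tsum_mem_locUnifClosure hη (summable_geometric_two.mul_left 2) hηb), ?_⟩
  have hlim : Tendsto (fun n => ω n x₀) atTop (𝓝 v) :=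
    tendsto_iff_norm_sub_tendsto_zero.2 <| squeeze_zero (fun _ => norm_nonneg _)
      (fun n => (hωv n).le) (tendsto_pow_atTop_nhds_zero_of_lt_one (by norm_num) (by norm_num))
  have hsum : HasSum (fun n => η n x₀) (v - ω 0 x₀) := by
    have hsummable : Summable fun n => η n x₀ :=
      .of_norm_bounded (summable_geometric_two.mul_left 2) (hηb · x₀)
    rw [hsummable.hasSum_iff_tendsto_nat]
    simp only [hηx₀, Pi.sub_apply, Finset.sum_range_sub fun n => ω n x₀]
    exact hlim.sub_const _
  rw [Pi.add_apply, hsum.tsum_eq, add_sub_cancel]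

end RCLike

theorem isCtsHilbertBundle_locUnifClosure {X : Type*} [TopologicalSpace X]
    {F : X → Type*} [∀ x, NormedAddCommGroup (F x)] [∀ x, InnerProductSpace ℂ (F x)]
    [∀ x, CompleteSpace (F x)] {S : Submodule ℂ (∀ x, F x)}
    (hS_norm : ∀ ω ∈ S, Continuous fun x => ‖ω x‖)
    (hS_dense : ∀ (x : X) (v : F x) (ε : ℝ), 0 < ε → ∃ ω ∈ S, ‖ω x - v‖ < ε) :
    IsCtsHilbertBundle (S.locUnifClosure : Set (∀ x, F x)) where
  zero_mem := zero_mem _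
  add_mem _ hω _ hν := add_mem hω hν
  smul_mem f _ hω := smul_mem_locUnifClosure hS_norm f hω
  full x := exists_mem_locUnifClosure_apply_eq hS_norm (hS_dense x)
  norm_continuous _ hω := hω.continuous_norm hS_norm
  closed_locUnif _ h := mem_locUnifClosure_of_locUnifApprox h

def imageOn {R M N : Type*} [Semiring R] [AddCommMonoid M] [AddCommMonoid N]
    [Module R M] [Module R N] (p : Submodule R M) (f : M → N)
    (hadd : ∀ x ∈ p, ∀ y ∈ p, f (x + y) = f x + f y)
    (hsmul : ∀ (c : R), ∀ x ∈ p, f (c • x) = c • f x) : Submodule R N where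
  carrier := f '' p
  zero_mem' := ⟨0, p.zero_mem, by simpa using hsmul 0 0 p.zero_mem⟩
  add_mem' := by
    rintro _ _ ⟨x, hx, rfl⟩ ⟨y, hy, rfl⟩
    exact ⟨x + y, p.add_mem hx hy, hadd x hx y hy⟩
  smul_mem' := by
    rintro c _ ⟨x, hx, rfl⟩
    exact ⟨c • x, p.smul_mem c hx, hsmul c x hx⟩

end Submodule

def IsCtsHilbertBundle.boundedFieldsSubmodule {T : Type*} [TopologicalSpace T] {H : T → Type*}
    [∀ t, NormedAddCommGroup (H t)] [∀ t, InnerProductSpace ℂ (H t)] {Ω : Set (∀ t, H t)}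
    (hΩ : IsCtsHilbertBundle Ω) : Submodule ℂ (∀ t, H t) where
  carrier := boundedFields Ω
  zero_mem' := ⟨hΩ.zero_mem, 0, fun t => by simp⟩
  add_mem' := by
    rintro ω ν ⟨hω, M, hM⟩ ⟨hν, N, hN⟩
    exact ⟨hΩ.add_mem ω hω ν hν, M + N,
      fun t => (norm_add_le _ _).trans (add_le_add (hM t) (hN t))⟩
  smul_mem' := by
    rintro c ω ⟨hω, M, hM⟩
    refine ⟨hΩ.smul_mem (.const T c) ω hω, ‖c‖ * M, fun t => ?_⟩
    rw [Pi.smul_apply, norm_smul]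
    exact mul_le_mul_of_nonneg_left (hM t) (norm_nonneg c)

theorem continuous_norm_of_continuous_inner_self {X : Type*} [TopologicalSpace X]
    {F : X → Type*} [∀ x, NormedAddCommGroup (F x)] [∀ x, InnerProductSpace ℂ (F x)]
    {ω : ∀ x, F x} (h : Continuous fun x => (inner ℂ (ω x) (ω x) : ℂ)) :
    Continuous fun x => ‖ω x‖ := by
  simp_rw [norm_eq_sqrt_re_inner (𝕜 := ℂ)]
  exact (RCLike.continuous_re.comp h).sqrt

theorem extended_bundle_isCtsHilbertBundle_general
    {T : Type} [TopologicalSpace T]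
    {H : T → Type} [∀ t, NormedAddCommGroup (H t)] [∀ t, InnerProductSpace ℂ (H t)]
    (Ω : Set (∀ t, H t)) (hΩ : IsCtsHilbertBundle Ω)
    -- the Stone–Čech compactification `βX^I` of `X^I`:
    {βX : Type} [TopologicalSpace βX]
    -- the fibres `H_t^I`, `t ∈ βX^I`:
    {HI : βX → Type} [∀ u, NormedAddCommGroup (HI u)]
    [∀ u, InnerProductSpace ℂ (HI u)] [∀ u, CompleteSpace (HI u)]
    -- `bar ω = ω̄^I`, the induced vector field on `βX^I` of `ω ∈ Ω_b`:
    (bar : (∀ t, H t) → ∀ u, HI u)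
    (hbar_add : ∀ ω ∈ boundedFields Ω, ∀ ν ∈ boundedFields Ω,
      bar (ω + ν) = bar ω + bar ν)
    (hbar_smul : ∀ (c : ℂ), ∀ ω ∈ boundedFields Ω, bar (c • ω) = c • bar ω)
    -- the extended inner products `⟨ω̄^I, ν̄^I⟩` are continuous on `βX^I` …
    (hbar_inner_cont : ∀ ω ∈ boundedFields Ω, ∀ ν ∈ boundedFields Ω,
      Continuous fun u => (inner ℂ (bar ω u) (bar ν u) : ℂ))
    -- each fibre `H_t^I` is the completion: `{ω̄^I(t) : ω ∈ Ω_b}` is dense: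
    (hbar_dense : ∀ (u : βX) (v : HI u) (ε : ℝ), 0 < ε →
      ∃ ω ∈ boundedFields Ω, ‖bar ω u - v‖ < ε) :
    -- conclusion: `Ω^I` satisfies axioms (I)–(IV) over `βX^I`
    IsCtsHilbertBundle
      {ν : ∀ u, HI u | LocUnifApprox (bar '' boundedFields Ω) ν} := by
  let E : Submodule ℂ (∀ u, HI u) := hΩ.boundedFieldsSubmodule.imageOn bar hbar_add hbar_smul
  refine E.isCtsHilbertBundle_locUnifClosure ?_ fun u v ε hε => ?_
  · rintro _ ⟨ω, hω, rfl⟩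
    exact continuous_norm_of_continuous_inner_self (hbar_inner_cont ω hω ω hω)
  · obtain ⟨ω, hω, hωv⟩ := hbar_dense u v ε hε
    exact ⟨bar ω, ⟨ω, hω, rfl⟩, hωv⟩

/-- Proposition `prop: ext chb`.  Let `A` be the Fell
C*-algebra of a continuous Hilbert bundle `(T, {H_t}, Ω)` over a locally compact
Hausdorff space `T` and let `I` be an ideal of `A`.  Given the Stone–Čech
compactification `βX^I` of the open set `X^I` and the fibres `H_t^I`
(the completions of `Ω_b|_{X^I}` w.r.t. the extended pre-inner products, with
induced vector fields `ω̄^I = bar ω` and `E^I = bar '' Ω_b`), the triple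
`(βX^I, {H_t^I}, Ω^I)` — where `Ω^I` is the set of local uniform limits of
elements of `E^I` — is a continuous Hilbert bundle. -/
theorem extended_bundle_isCtsHilbertBundle
    {T : Type} [TopologicalSpace T] [LocallyCompactSpace T] [T2Space T]
    {H : T → Type} [∀ t, NormedAddCommGroup (H t)] [∀ t, InnerProductSpace ℂ (H t)]
    [∀ t, CompleteSpace (H t)]
    (Ω : Set (∀ t, H t)) (hΩ : IsCtsHilbertBundle Ω)
    (I : Set (∀ t, H t →L[ℂ] H t)) (hI : IsIdealOf (FellAlgebra Ω) I)
    -- the Stone–Čech compactification `βX^I` of `X^I`: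
    {βX : Type} [TopologicalSpace βX] [CompactSpace βX] [T2Space βX]
    (ι : idealSupp I → βX) (hι : Topology.IsEmbedding ι) (hιdense : DenseRange ι)
    -- the fibres `H_t^I`, `t ∈ βX^I`:
    {HI : βX → Type} [∀ u, NormedAddCommGroup (HI u)]
    [∀ u, InnerProductSpace ℂ (HI u)] [∀ u, CompleteSpace (HI u)]
    -- `bar ω = ω̄^I`, the induced vector field on `βX^I` of `ω ∈ Ω_b`:
    (bar : (∀ t, H t) → ∀ u, HI u)
    (hbar_add : ∀ ω ∈ boundedFields Ω, ∀ ν ∈ boundedFields Ω,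
      bar (ω + ν) = bar ω + bar ν)
    (hbar_smul : ∀ (c : ℂ), ∀ ω ∈ boundedFields Ω, bar (c • ω) = c • bar ω)
    -- the extended inner products `⟨ω̄^I, ν̄^I⟩` are continuous on `βX^I` …
    (hbar_inner_cont : ∀ ω ∈ boundedFields Ω, ∀ ν ∈ boundedFields Ω,
      Continuous fun u => (inner ℂ (bar ω u) (bar ν u) : ℂ))
    -- … and extend the pointwise inner products on `X^I`:
    (hbar_inner_eq : ∀ ω ∈ boundedFields Ω, ∀ ν ∈ boundedFields Ω,
      ∀ x : idealSupp I, (inner ℂ (bar ω (ι x)) (bar ν (ι x)) : ℂ) =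
        (inner ℂ (ω x.1) (ν x.1) : ℂ))
    -- each fibre `H_t^I` is the completion: `{ω̄^I(t) : ω ∈ Ω_b}` is dense:
    (hbar_dense : ∀ (u : βX) (v : HI u) (ε : ℝ), 0 < ε →
      ∃ ω ∈ boundedFields Ω, ‖bar ω u - v‖ < ε) :
    -- conclusion: `Ω^I` satisfies axioms (I)–(IV) over `βX^I`
    IsCtsHilbertBundle
      {ν : ∀ u, HI u | LocUnifApprox (bar '' boundedFields Ω) ν} :=
  extended_bundle_isCtsHilbertBundle_general Ω hΩ bar hbar_add hbar_smul hbar_inner_cont hbar_dense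
end

section
/- Let A be the Fell C*-algebra of a continuous Hilbert bundle over a locally compact Hausdorff space T, let I ⊆ J be essential ideals of A, and let t ∈ βX^I. Then the assignment ω̄^J(Φ_{JI}(t)) ↦ ω̄^I(t), for ω ∈ Ω_b, is a well-defined isometric linear map on a dense subspace of H^J_{Φ_{JI}(t)} and extends to a unitary Ψ_{JIt}: H^J_{Φ_{JI}(t)} → H^I_t. Moreover, for essential ideals I ⊆ J ⊆ K of A one has Ψ_{KIt} = Ψ_{JIt} ∘ Ψ_{KJ,Φ_{JI}(t)}. -/
/-! The Gram functions `t ↦ ⟪ω̄^J(Φ_{JI} t), ν̄^J(Φ_{JI} t)⟫` and `t ↦ ⟪ω̄^I t, ν̄^I t⟫` are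
continuous on `βX^I` and agree on its dense subset `X^I`, hence everywhere. Two families with
equal Gram matrices and dense spans in Hilbert spaces are matched by a unitary, which is
`Ψ_{JIt}`. Both sides of the cocycle identity are unitaries agreeing on the dense set of vectors
`ω̄^K(Φ_{KI} t)`, so they coincide. -/

open Submodule in
theorem LinearMap.exists_linearIsometryEquiv_comp_eq {𝕜 M E F : Type*} [NormedField 𝕜]
    [AddCommGroup M] [Module 𝕜 M]
    [NormedAddCommGroup E] [NormedSpace 𝕜 E] [CompleteSpace E]
    [NormedAddCommGroup F] [NormedSpace 𝕜 F] [CompleteSpace F]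
    (f : M →ₗ[𝕜] E) (g : M →ₗ[𝕜] F) (hf : DenseRange f) (hg : DenseRange g)
    (hfg : ∀ m, ‖g m‖ = ‖f m‖) :
    ∃ Ψ : E ≃ₗᵢ[𝕜] F, ∀ m, Ψ (f m) = g m := by
  have hker : ker f = ker g := by
    ext m
    simp only [mem_ker, ← norm_eq_zero (a := f m), ← norm_eq_zero (a := g m), hfg]
  let φ : range f ≃ₗ[𝕜] range g :=
    f.quotKerEquivRange.symm ≪≫ₗ quotEquivOfEq _ _ hker ≪≫ₗ g.quotKerEquivRange
  have hφ : ∀ m, φ ⟨f m, mem_range_self f m⟩ = ⟨g m, mem_range_self g m⟩ := fun m => by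
    simp only [φ, LinearEquiv.trans_apply, quotKerEquivRange_symm_apply_image, mkQ_apply,
      quotEquivOfEq_mk]
    rfl
  have hf' : DenseRange (range f).subtype := by
    rwa [DenseRange, coe_subtype, Subtype.range_coe, LinearMap.coe_range]
  have hg' : DenseRange (range g).subtype := by
    rwa [DenseRange, coe_subtype, Subtype.range_coe, LinearMap.coe_range]
  refine ⟨φ.extendOfIsometry _ _ hf' hg' ?_, fun m => ?_⟩
  · rintro ⟨_, m, rfl⟩
    simp [hφ, hfg]
  · simpa [hφ] using φ.extendOfIsometry_eq _ _ hf' hg' _ ⟨f m, mem_range_self f m⟩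

theorem exists_linearIsometryEquiv_of_inner_eq {𝕜 ι E F : Type*} [RCLike 𝕜]
    [NormedAddCommGroup E] [InnerProductSpace 𝕜 E] [CompleteSpace E]
    [NormedAddCommGroup F] [InnerProductSpace 𝕜 F] [CompleteSpace F]
    (a : ι → E) (b : ι → F) (hab : ∀ i j, inner 𝕜 (a i) (a j) = inner 𝕜 (b i) (b j))
    (ha : Dense (Submodule.span 𝕜 (Set.range a) : Set E))
    (hb : Dense (Submodule.span 𝕜 (Set.range b) : Set F)) :
    ∃ Ψ : E ≃ₗᵢ[𝕜] F, ∀ i, Ψ (a i) = b i := by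
  set A := Finsupp.linearCombination 𝕜 a
  set B := Finsupp.linearCombination 𝕜 b
  have hinner : ∀ c, inner 𝕜 (A c) (A c) = inner 𝕜 (B c) (B c) := fun c => by
    simp only [A, B, Finsupp.linearCombination_apply, Finsupp.sum, sum_inner, inner_sum,
      inner_smul_left, inner_smul_right, hab]
  obtain ⟨Ψ, hΨ⟩ := LinearMap.exists_linearIsometryEquiv_comp_eq A B
    (by rwa [DenseRange, ← LinearMap.coe_range, Finsupp.range_linearCombination])
    (by rwa [DenseRange, ← LinearMap.coe_range, Finsupp.range_linearCombination])
    (fun c => by rw [@norm_eq_sqrt_re_inner 𝕜, @norm_eq_sqrt_re_inner 𝕜, hinner])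
  exact ⟨Ψ, fun i => by simpa [A, B] using hΨ (Finsupp.single i 1)⟩

theorem denseRange_restrict_of_forall_exists_norm_sub_lt {V E : Type*}
    [SeminormedAddCommGroup E] {S : Set V} {f : V → E}
    (h : ∀ (v : E) (ε : ℝ), 0 < ε → ∃ x ∈ S, ‖f x - v‖ < ε) : DenseRange fun x : S => f x :=
  Metric.denseRange_iff.2 fun v ε hε =>
    let ⟨x, hx, hxv⟩ := h v ε hε
    ⟨⟨x, hx⟩, by rwa [dist_comm, dist_eq_norm]⟩

theorem apply_eq_apply_cast_of_denseRange {X ι G : Type*} [TopologicalSpace G] [T2Space G]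
    {E : X → Type*} [∀ x, TopologicalSpace (E x)] (s : ι → ∀ x, E x) {x y : X} (hxy : x = y)
    (hs : DenseRange fun i => s i x) {f : E x → G} {g : E y → G} (hf : Continuous f)
    (hg : Continuous g) (hfg : ∀ i, f (s i x) = g (s i y)) (v : E x) :
    f v = g (cast (congrArg E hxy) v) := by
  subst hxy
  exact congrFun (hs.equalizer hf hg (funext hfg)) v

theorem exists_connecting_unitaries_general
    {T : Type}
    {H : T → Type} [∀ t, NormedAddCommGroup (H t)] [∀ t, InnerProductSpace ℂ (H t)]
    (Ω : Set (∀ t, H t))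
    (I J : Set (∀ t, H t →L[ℂ] H t))
    (hXIJ : (idealSupp I : Set T) ⊆ idealSupp J)
    -- Stone–Čech compactifications of `X^I`, `X^J`, `X^K`:
    {βXI βXJ βXK : Type}
    [TopologicalSpace βXI]
    [TopologicalSpace βXJ]
    (ιI : idealSupp I → βXI) (hιId : DenseRange ιI)
    (ιJ : idealSupp J → βXJ)
    -- the fibres over the three compactifications:
    {HI : βXI → Type} [∀ u, NormedAddCommGroup (HI u)]
    [∀ u, InnerProductSpace ℂ (HI u)] [∀ u, CompleteSpace (HI u)]
    {HJ : βXJ → Type} [∀ u, NormedAddCommGroup (HJ u)]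
    [∀ u, InnerProductSpace ℂ (HJ u)] [∀ u, CompleteSpace (HJ u)]
    {HK : βXK → Type} [∀ u, NormedAddCommGroup (HK u)]
    [∀ u, InnerProductSpace ℂ (HK u)]
    -- the induced fields `ω̄^I`, `ω̄^J`, `ω̄^K`:
    (barI : (∀ t, H t) → ∀ u, HI u) (barJ : (∀ t, H t) → ∀ u, HJ u)
    (barK : (∀ t, H t) → ∀ u, HK u)
    (hbarI_cont : ∀ ω ∈ boundedFields Ω, ∀ ν ∈ boundedFields Ω,
      Continuous fun u => (inner ℂ (barI ω u) (barI ν u) : ℂ))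
    (hbarI_eq : ∀ ω ∈ boundedFields Ω, ∀ ν ∈ boundedFields Ω,
      ∀ x : idealSupp I, (inner ℂ (barI ω (ιI x)) (barI ν (ιI x)) : ℂ) =
        (inner ℂ (ω x.1) (ν x.1) : ℂ))
    (hbarI_dense : ∀ (u : βXI) (v : HI u) (ε : ℝ), 0 < ε →
      ∃ ω ∈ boundedFields Ω, ‖barI ω u - v‖ < ε)
    (hbarJ_cont : ∀ ω ∈ boundedFields Ω, ∀ ν ∈ boundedFields Ω,
      Continuous fun u => (inner ℂ (barJ ω u) (barJ ν u) : ℂ))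
    (hbarJ_eq : ∀ ω ∈ boundedFields Ω, ∀ ν ∈ boundedFields Ω,
      ∀ x : idealSupp J, (inner ℂ (barJ ω (ιJ x)) (barJ ν (ιJ x)) : ℂ) =
        (inner ℂ (ω x.1) (ν x.1) : ℂ))
    (hbarJ_dense : ∀ (u : βXJ) (v : HJ u) (ε : ℝ), 0 < ε →
      ∃ ω ∈ boundedFields Ω, ‖barJ ω u - v‖ < ε)
    (hbarK_dense : ∀ (u : βXK) (v : HK u) (ε : ℝ), 0 < ε →
      ∃ ω ∈ boundedFields Ω, ‖barK ω u - v‖ < ε)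
    -- the connecting maps `Φ_{JI}`, `Φ_{KJ}`, `Φ_{KI}`:
    (ΦJI : βXI → βXJ) (hΦJI : Continuous ΦJI)
    (hΦJIι : ∀ x : idealSupp I, ΦJI (ιI x) = ιJ (Set.inclusion hXIJ x))
    (ΦKJ : βXJ → βXK)
    (ΦKI : βXI → βXK)
    (hΦcomp : ∀ t : βXI, ΦKI t = ΦKJ (ΦJI t)) :
    -- (1): well-definedness and isometry on the dense subspace `E^J(Φ_{JI}t)`:
    (∀ t : βXI, ∀ ω ∈ boundedFields Ω, ∀ ν ∈ boundedFields Ω,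
      ‖barJ ω (ΦJI t) - barJ ν (ΦJI t)‖ = ‖barI ω t - barI ν t‖) ∧
    -- (2): existence of the unitary extension `Ψ_{JIt}`:
    (∀ t : βXI, ∃ Ψ : HJ (ΦJI t) ≃ₗᵢ[ℂ] HI t,
      ∀ ω ∈ boundedFields Ω, Ψ (barJ ω (ΦJI t)) = barI ω t) ∧
    -- (3): the cocycle identity `Ψ_{KIt} = Ψ_{JIt} ∘ Ψ_{KJ,Φ_{JI}(t)}` for any
    -- unitaries with the characterising property:
    (∀ (ΨJI : ∀ t : βXI, HJ (ΦJI t) ≃ₗᵢ[ℂ] HI t)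
      (ΨKJ : ∀ r : βXJ, HK (ΦKJ r) ≃ₗᵢ[ℂ] HJ r)
      (ΨKI : ∀ t : βXI, HK (ΦKI t) ≃ₗᵢ[ℂ] HI t),
      (∀ (t : βXI), ∀ ω ∈ boundedFields Ω, ΨJI t (barJ ω (ΦJI t)) = barI ω t) →
      (∀ (r : βXJ), ∀ ω ∈ boundedFields Ω, ΨKJ r (barK ω (ΦKJ r)) = barJ ω r) →
      (∀ (t : βXI), ∀ ω ∈ boundedFields Ω, ΨKI t (barK ω (ΦKI t)) = barI ω t) →
      ∀ (t : βXI) (v : HK (ΦKI t)),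
        ΨKI t v = ΨJI t (ΨKJ (ΦJI t) (cast (congrArg HK (hΦcomp t)) v))) := by
  have hgram : ∀ t, ∀ ω ∈ boundedFields Ω, ∀ ν ∈ boundedFields Ω,
      inner ℂ (barJ ω (ΦJI t)) (barJ ν (ΦJI t)) = inner ℂ (barI ω t) (barI ν t) :=
    fun t ω hω ν hν => congrFun (hιId.equalizer ((hbarJ_cont ω hω ν hν).comp hΦJI)
      (hbarI_cont ω hω ν hν) (funext fun x => by
        simp only [Function.comp_apply]
        rw [hΦJIι, hbarJ_eq ω hω ν hν, hbarI_eq ω hω ν hν])) t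
  have hΨ : ∀ t : βXI, ∃ Ψ : HJ (ΦJI t) ≃ₗᵢ[ℂ] HI t,
      ∀ ω ∈ boundedFields Ω, Ψ (barJ ω (ΦJI t)) = barI ω t := fun t => by
    obtain ⟨Ψ, hΨ⟩ := exists_linearIsometryEquiv_of_inner_eq
      (fun ω : boundedFields Ω => barJ ω (ΦJI t)) (fun ω : boundedFields Ω => barI ω t)
      (fun ω ν => hgram t ω ω.2 ν ν.2)
      ((denseRange_restrict_of_forall_exists_norm_sub_lt (hbarJ_dense _)).mono
        Submodule.subset_span)
      ((denseRange_restrict_of_forall_exists_norm_sub_lt (hbarI_dense t)).mono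
        Submodule.subset_span)
    exact ⟨Ψ, fun ω hω => hΨ ⟨ω, hω⟩⟩
  refine ⟨fun t ω hω ν hν => ?_, hΨ, fun ΨJI ΨKJ ΨKI hJI hKJ hKI t v => ?_⟩
  · obtain ⟨Ψ, hΨ⟩ := hΨ t
    rw [← Ψ.norm_map, map_sub, hΨ ω hω, hΨ ν hν]
  · refine apply_eq_apply_cast_of_denseRange (fun ω : boundedFields Ω => barK ω) (hΦcomp t)
      (denseRange_restrict_of_forall_exists_norm_sub_lt (hbarK_dense _)) (ΨKI t).continuous
      ((ΨJI t).continuous.comp (ΨKJ (ΦJI t)).continuous) (fun ω => ?_) v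
    rw [Function.comp_apply, hKI t ω ω.2, hKJ (ΦJI t) ω ω.2, hJI t ω ω.2]

/-- equation `e:hs iso`.  Let `A` be the Fell C*-algebra of a
continuous Hilbert bundle over a locally compact Hausdorff space `T`, let
`I ⊆ J` be essential ideals of `A`, and let `t ∈ βX^I`.  Then
`ω̄^J(Φ_{JI}(t)) ↦ ω̄^I(t)` is well defined and isometric on the dense subspace
`{ω̄^J(Φ_{JI}(t)) : ω ∈ Ω_b}` of `H^J_{Φ_{JI}(t)}` and extends to a unitary
`Ψ_{JIt} : H^J_{Φ_{JI}(t)} → H^I_t`; moreover, for essential ideals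
`I ⊆ J ⊆ K`, `Ψ_{KIt} = Ψ_{JIt} ∘ Ψ_{KJ,Φ_{JI}(t)}`. -/
theorem exists_connecting_unitaries
    {T : Type} [TopologicalSpace T] [LocallyCompactSpace T] [T2Space T]
    {H : T → Type} [∀ t, NormedAddCommGroup (H t)] [∀ t, InnerProductSpace ℂ (H t)]
    [∀ t, CompleteSpace (H t)]
    (Ω : Set (∀ t, H t)) (hΩ : IsCtsHilbertBundle Ω)
    (I J K : Set (∀ t, H t →L[ℂ] H t))
    (hI : IsEssentialIdealOf (FellAlgebra Ω) I)
    (hJ : IsEssentialIdealOf (FellAlgebra Ω) J)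
    (hK : IsEssentialIdealOf (FellAlgebra Ω) K)
    (hIJ : I ⊆ J) (hJK : J ⊆ K)
    (hXIJ : (idealSupp I : Set T) ⊆ idealSupp J)
    (hXJK : (idealSupp J : Set T) ⊆ idealSupp K)
    -- Stone–Čech compactifications of `X^I`, `X^J`, `X^K`:
    {βXI βXJ βXK : Type}
    [TopologicalSpace βXI] [CompactSpace βXI] [T2Space βXI]
    [TopologicalSpace βXJ] [CompactSpace βXJ] [T2Space βXJ]
    [TopologicalSpace βXK] [CompactSpace βXK] [T2Space βXK]
    (ιI : idealSupp I → βXI) (hιI : Topology.IsEmbedding ιI) (hιId : DenseRange ιI)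
    (ιJ : idealSupp J → βXJ) (hιJ : Topology.IsEmbedding ιJ) (hιJd : DenseRange ιJ)
    (ιK : idealSupp K → βXK) (hιK : Topology.IsEmbedding ιK) (hιKd : DenseRange ιK)
    -- the fibres over the three compactifications:
    {HI : βXI → Type} [∀ u, NormedAddCommGroup (HI u)]
    [∀ u, InnerProductSpace ℂ (HI u)] [∀ u, CompleteSpace (HI u)]
    {HJ : βXJ → Type} [∀ u, NormedAddCommGroup (HJ u)]
    [∀ u, InnerProductSpace ℂ (HJ u)] [∀ u, CompleteSpace (HJ u)]
    {HK : βXK → Type} [∀ u, NormedAddCommGroup (HK u)]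
    [∀ u, InnerProductSpace ℂ (HK u)] [∀ u, CompleteSpace (HK u)]
    -- the induced fields `ω̄^I`, `ω̄^J`, `ω̄^K`:
    (barI : (∀ t, H t) → ∀ u, HI u) (barJ : (∀ t, H t) → ∀ u, HJ u)
    (barK : (∀ t, H t) → ∀ u, HK u)
    (hbarI_cont : ∀ ω ∈ boundedFields Ω, ∀ ν ∈ boundedFields Ω,
      Continuous fun u => (inner ℂ (barI ω u) (barI ν u) : ℂ))
    (hbarI_eq : ∀ ω ∈ boundedFields Ω, ∀ ν ∈ boundedFields Ω,
      ∀ x : idealSupp I, (inner ℂ (barI ω (ιI x)) (barI ν (ιI x)) : ℂ) =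
        (inner ℂ (ω x.1) (ν x.1) : ℂ))
    (hbarI_dense : ∀ (u : βXI) (v : HI u) (ε : ℝ), 0 < ε →
      ∃ ω ∈ boundedFields Ω, ‖barI ω u - v‖ < ε)
    (hbarJ_cont : ∀ ω ∈ boundedFields Ω, ∀ ν ∈ boundedFields Ω,
      Continuous fun u => (inner ℂ (barJ ω u) (barJ ν u) : ℂ))
    (hbarJ_eq : ∀ ω ∈ boundedFields Ω, ∀ ν ∈ boundedFields Ω,
      ∀ x : idealSupp J, (inner ℂ (barJ ω (ιJ x)) (barJ ν (ιJ x)) : ℂ) =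
        (inner ℂ (ω x.1) (ν x.1) : ℂ))
    (hbarJ_dense : ∀ (u : βXJ) (v : HJ u) (ε : ℝ), 0 < ε →
      ∃ ω ∈ boundedFields Ω, ‖barJ ω u - v‖ < ε)
    (hbarK_cont : ∀ ω ∈ boundedFields Ω, ∀ ν ∈ boundedFields Ω,
      Continuous fun u => (inner ℂ (barK ω u) (barK ν u) : ℂ))
    (hbarK_eq : ∀ ω ∈ boundedFields Ω, ∀ ν ∈ boundedFields Ω,
      ∀ x : idealSupp K, (inner ℂ (barK ω (ιK x)) (barK ν (ιK x)) : ℂ) =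
        (inner ℂ (ω x.1) (ν x.1) : ℂ))
    (hbarK_dense : ∀ (u : βXK) (v : HK u) (ε : ℝ), 0 < ε →
      ∃ ω ∈ boundedFields Ω, ‖barK ω u - v‖ < ε)
    -- the connecting maps `Φ_{JI}`, `Φ_{KJ}`, `Φ_{KI}`:
    (ΦJI : βXI → βXJ) (hΦJI : Continuous ΦJI)
    (hΦJIι : ∀ x : idealSupp I, ΦJI (ιI x) = ιJ (Set.inclusion hXIJ x))
    (ΦKJ : βXJ → βXK) (hΦKJ : Continuous ΦKJ)
    (hΦKJι : ∀ x : idealSupp J, ΦKJ (ιJ x) = ιK (Set.inclusion hXJK x))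
    (ΦKI : βXI → βXK) (hΦKI : Continuous ΦKI)
    (hΦKIι : ∀ x : idealSupp I,
      ΦKI (ιI x) = ιK (Set.inclusion (hXIJ.trans hXJK) x))
    (hΦcomp : ∀ t : βXI, ΦKI t = ΦKJ (ΦJI t)) :
    -- (1): well-definedness and isometry on the dense subspace `E^J(Φ_{JI}t)`:
    (∀ t : βXI, ∀ ω ∈ boundedFields Ω, ∀ ν ∈ boundedFields Ω,
      ‖barJ ω (ΦJI t) - barJ ν (ΦJI t)‖ = ‖barI ω t - barI ν t‖) ∧
    -- (2): existence of the unitary extension `Ψ_{JIt}`: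
    (∀ t : βXI, ∃ Ψ : HJ (ΦJI t) ≃ₗᵢ[ℂ] HI t,
      ∀ ω ∈ boundedFields Ω, Ψ (barJ ω (ΦJI t)) = barI ω t) ∧
    -- (3): the cocycle identity `Ψ_{KIt} = Ψ_{JIt} ∘ Ψ_{KJ,Φ_{JI}(t)}` for any
    -- unitaries with the characterising property:
    (∀ (ΨJI : ∀ t : βXI, HJ (ΦJI t) ≃ₗᵢ[ℂ] HI t)
      (ΨKJ : ∀ r : βXJ, HK (ΦKJ r) ≃ₗᵢ[ℂ] HJ r)
      (ΨKI : ∀ t : βXI, HK (ΦKI t) ≃ₗᵢ[ℂ] HI t),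
      (∀ (t : βXI), ∀ ω ∈ boundedFields Ω, ΨJI t (barJ ω (ΦJI t)) = barI ω t) →
      (∀ (r : βXJ), ∀ ω ∈ boundedFields Ω, ΨKJ r (barK ω (ΦKJ r)) = barJ ω r) →
      (∀ (t : βXI), ∀ ω ∈ boundedFields Ω, ΨKI t (barK ω (ΦKI t)) = barI ω t) →
      ∀ (t : βXI) (v : HK (ΦKI t)),
        ΨKI t v = ΨJI t (ΨKJ (ΦJI t) (cast (congrArg HK (hΦcomp t)) v))) :=
  exists_connecting_unitaries_general Ω I J hXIJ ιI hιId ιJ barI barJ barK hbarI_cont hbarI_eq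
    hbarI_dense hbarJ_cont hbarJ_eq hbarJ_dense hbarK_dense ΦJI hΦJI hΦJIι ΦKJ ΦKI hΦcomp
end

section
/- Let A be the Fell C*-algebra of a continuous Hilbert bundle over a locally compact Hausdorff space T and let I ⊆ J be essential ideals of A. For ν ∈ Ω^J define λ_{JI}ν on βX^I by (λ_{JI}ν)(t) = Ψ_{JIt}(ν(Φ_{JI}(t))). Then λ_{JI}ν ∈ Ω^I, and λ_{JI}: Ω^J → Ω^I is a linear isometry with respect to the supremum norms (in particular sup_{t∈βX^I} ‖(λ_{JI}ν)(t)‖ = sup_{r∈βX^J} ‖ν(r)‖). Moreover λ_{II} = id and λ_{KI} = λ_{JI} ∘ λ_{KJ} whenever I ⊆ J ⊆ K are essential ideals, so that ({Ω^I}, {λ_{JI}}) is a direct system of normed spaces of bounded vector fields and linear isometries. -/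
/-! `λ_{JI}` is pullback of vector fields along `Φ_{JI}` followed by the fibrewise unitaries
`Ψ_{JI}`. Since the `Ψ_{JIt}` are isometries carrying `ω̄^J` to `ω̄^I`, local uniform
approximation by the `ω̄^J` pulls back along the continuous map `Φ_{JI}` to local uniform
approximation by the `ω̄^I`, and the supremum norm is preserved because `Φ_{JI}` is surjective.
The identities `λ_{II} = id` and `λ_{KI} = λ_{JI} ∘ λ_{KJ}` hold on the fields `ω̄`, whose
values are dense in every fibre, hence on all fields by continuity of the unitaries; for
`λ_{II}` one first notes that `Φ_{II}` is the identity, as it fixes the dense subset `X^I`. -/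

section PullbackField

open Set Function

variable {X Y 𝕜 : Type*} [Semiring 𝕜]
  {E : Y → Type*} [∀ y, NormedAddCommGroup (E y)] [∀ y, Module 𝕜 (E y)]
  {F : X → Type*} [∀ x, NormedAddCommGroup (F x)] [∀ x, Module 𝕜 (F x)]

def pullbackField (Φ : X → Y) (Ψ : ∀ x, E (Φ x) →ₗᵢ[𝕜] F x) (ν : ∀ y, E y) : ∀ x, F x :=
  fun x => Ψ x (ν (Φ x))

theorem LocUnifApprox.pullback [TopologicalSpace X] [TopologicalSpace Y] {Φ : X → Y}
    (hΦ : Continuous Φ) {Ψ : ∀ x, E (Φ x) →ₗᵢ[𝕜] F x} {S : Set (∀ y, E y)}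
    {S' : Set (∀ x, F x)} (hS : MapsTo (pullbackField Φ Ψ) S S')
    {ν : ∀ y, E y} (hν : LocUnifApprox S ν) : LocUnifApprox S' (pullbackField Φ Ψ ν) := by
  intro x₀ ε hε
  obtain ⟨U, hU, hx₀, σ, hσ, hσν⟩ := hν (Φ x₀) ε hε
  refine ⟨Φ ⁻¹' U, hU.preimage hΦ, hx₀, _, hS hσ, fun x hx => ?_⟩
  rw [pullbackField, pullbackField, ← map_sub, LinearIsometry.norm_map]
  exact hσν (Φ x) hx

theorem iSup_norm_pullbackField {Φ : X → Y} (hΦ : Surjective Φ) (Ψ : ∀ x, E (Φ x) →ₗᵢ[𝕜] F x)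
    (ν : ∀ y, E y) : ⨆ x, ‖pullbackField Φ Ψ ν x‖ = ⨆ y, ‖ν y‖ := by
  simp only [pullbackField, LinearIsometry.norm_map]
  exact hΦ.iSup_comp fun y => ‖ν y‖

theorem pullbackField_eq_of_dense {Φ Φ' : X → Y} (hΦ : ∀ x, Φ x = Φ' x)
    {Ψ : ∀ x, E (Φ x) →ₗᵢ[𝕜] F x} {Ψ' : ∀ x, E (Φ' x) →ₗᵢ[𝕜] F x} {S : Set (∀ y, E y)}
    (hS : ∀ y, Dense ((fun σ => σ y) '' S))
    (hΨ : ∀ σ ∈ S, pullbackField Φ Ψ σ = pullbackField Φ' Ψ' σ) (ν : ∀ y, E y) :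
    pullbackField Φ Ψ ν = pullbackField Φ' Ψ' ν := by
  obtain rfl : Φ = Φ' := funext hΦ
  funext x
  have hΨΨ' : ⇑(Ψ x) = Ψ' x := by
    refine Continuous.ext_on (hS (Φ x)) (Ψ x).continuous (Ψ' x).continuous ?_
    rintro _ ⟨σ, hσ, rfl⟩
    exact congrFun (hΨ σ hσ) x
  exact congrFun hΨΨ' (ν (Φ x))

end PullbackField

theorem dense_eval_image_of_forall_exists_norm_sub_lt {α U : Type*} {E : U → Type*}
    [∀ u, NormedAddCommGroup (E u)] {f : α → ∀ u, E u} {s : Set α}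
    (h : ∀ (u : U) (v : E u) (ε : ℝ), 0 < ε → ∃ a ∈ s, ‖f a u - v‖ < ε) (u : U) :
    Dense ((fun σ => σ u) '' (f '' s)) := by
  rw [Set.image_image]
  refine fun v => Metric.mem_closure_iff.mpr fun ε hε => ?_
  obtain ⟨a, ha, hav⟩ := h u v ε hε
  exact ⟨f a u, Set.mem_image_of_mem _ ha, by rwa [dist_eq_norm, norm_sub_rev]⟩

theorem lambda_direct_system_general
    {T : Type}
    {H : T → Type} [∀ t, NormedAddCommGroup (H t)] [∀ t, InnerProductSpace ℂ (H t)]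
    [∀ t, CompleteSpace (H t)]
    (Ω : Set (∀ t, H t))
    (I : Set (∀ t, H t →L[ℂ] H t))
    {βXI βXJ βXK : Type}
    [TopologicalSpace βXI] [T2Space βXI]
    [TopologicalSpace βXJ]
    [TopologicalSpace βXK]
    (ιI : idealSupp I → βXI) (hιId : DenseRange ιI)
    {HI : βXI → Type} [∀ u, NormedAddCommGroup (HI u)]
    [∀ u, InnerProductSpace ℂ (HI u)]
    {HJ : βXJ → Type} [∀ u, NormedAddCommGroup (HJ u)]
    [∀ u, InnerProductSpace ℂ (HJ u)]
    {HK : βXK → Type} [∀ u, NormedAddCommGroup (HK u)]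
    [∀ u, InnerProductSpace ℂ (HK u)]
    (barI : (∀ t, H t) → ∀ u, HI u) (barJ : (∀ t, H t) → ∀ u, HJ u)
    (barK : (∀ t, H t) → ∀ u, HK u)
    (hbarI_dense : ∀ (u : βXI) (v : HI u) (ε : ℝ), 0 < ε →
      ∃ ω ∈ boundedFields Ω, ‖barI ω u - v‖ < ε)
    (hbarK_dense : ∀ (u : βXK) (v : HK u) (ε : ℝ), 0 < ε →
      ∃ ω ∈ boundedFields Ω, ‖barK ω u - v‖ < ε)
    -- the connecting maps `Φ_{JI}`, `Φ_{KJ}`, `Φ_{KI}` (continuous surjections):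
    (ΦJI : βXI → βXJ) (hΦJI : Continuous ΦJI) (hΦJIsurj : Function.Surjective ΦJI)
    (ΦKJ : βXJ → βXK)
    (ΦKI : βXI → βXK)
    (hΦcomp : ∀ t : βXI, ΦKI t = ΦKJ (ΦJI t))
    -- the unitaries `Ψ_{JIt}`, `Ψ_{KJr}`, `Ψ_{KIt}`:
    (ΨJI : ∀ t : βXI, HJ (ΦJI t) ≃ₗᵢ[ℂ] HI t)
    (ΨKJ : ∀ r : βXJ, HK (ΦKJ r) ≃ₗᵢ[ℂ] HJ r)
    (ΨKI : ∀ t : βXI, HK (ΦKI t) ≃ₗᵢ[ℂ] HI t)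
    (hΨJI : ∀ (t : βXI), ∀ ω ∈ boundedFields Ω, ΨJI t (barJ ω (ΦJI t)) = barI ω t)
    (hΨKJ : ∀ (r : βXJ), ∀ ω ∈ boundedFields Ω, ΨKJ r (barK ω (ΦKJ r)) = barJ ω r)
    (hΨKI : ∀ (t : βXI), ∀ ω ∈ boundedFields Ω,
      ΨKI t (barK ω (ΦKI t)) = barI ω t) :
    -- `λ_{JI}` maps `Ω^J` into `Ω^I` …
    (∀ ν ∈ {ν : ∀ u, HJ u | LocUnifApprox (barJ '' boundedFields Ω) ν},
      (fun t => ΨJI t (ν (ΦJI t))) ∈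
        {ν : ∀ u, HI u | LocUnifApprox (barI '' boundedFields Ω) ν}) ∧
    -- … is linear …
    (∀ ν μ : ∀ u, HJ u, (fun t => ΨJI t ((ν + μ) (ΦJI t))) =
      (fun t => ΨJI t (ν (ΦJI t))) + fun t => ΨJI t (μ (ΦJI t))) ∧
    (∀ (c : ℂ) (ν : ∀ u, HJ u), (fun t => ΨJI t ((c • ν) (ΦJI t))) =
      c • fun t => ΨJI t (ν (ΦJI t))) ∧
    -- … and isometric for the supremum norms:
    (∀ ν ∈ {ν : ∀ u, HJ u | LocUnifApprox (barJ '' boundedFields Ω) ν},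
      (⨆ t : βXI, ‖ΨJI t (ν (ΦJI t))‖) = ⨆ r : βXJ, ‖ν r‖) ∧
    -- `λ_{II} = id`:
    (∀ (ΦII : βXI → βXI), Continuous ΦII → (∀ x : idealSupp I, ΦII (ιI x) = ιI x) →
      ∀ (ΨII : ∀ t : βXI, HI (ΦII t) ≃ₗᵢ[ℂ] HI t),
      (∀ (t : βXI), ∀ ω ∈ boundedFields Ω, ΨII t (barI ω (ΦII t)) = barI ω t) →
      ∀ ν ∈ {ν : ∀ u, HI u | LocUnifApprox (barI '' boundedFields Ω) ν},
        (fun t => ΨII t (ν (ΦII t))) = ν) ∧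
    -- `λ_{KI} = λ_{JI} ∘ λ_{KJ}`:
    (∀ ν ∈ {ν : ∀ u, HK u | LocUnifApprox (barK '' boundedFields Ω) ν},
      (fun t => ΨKI t (ν (ΦKI t))) =
        fun t => ΨJI t (ΨKJ (ΦJI t) (ν (ΦKJ (ΦJI t))))) := by
  let ΨJI' := fun t => (ΨJI t).toLinearIsometry
  let pullJI := pullbackField ΦJI ΨJI'
  let pullKJ := pullbackField ΦKJ fun r => (ΨKJ r).toLinearIsometry
  let pullKI := pullbackField ΦKI fun t => (ΨKI t).toLinearIsometry
  have hpullJI : ∀ ω ∈ boundedFields Ω, pullJI (barJ ω) = barI ω :=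
    fun ω hω => funext fun t => hΨJI t ω hω
  have hpullKJ : ∀ ω ∈ boundedFields Ω, pullKJ (barK ω) = barJ ω :=
    fun ω hω => funext fun r => hΨKJ r ω hω
  have hpullKI : ∀ ω ∈ boundedFields Ω, pullKI (barK ω) = barI ω :=
    fun ω hω => funext fun t => hΨKI t ω hω
  refine ⟨fun ν hν => hν.pullback (Ψ := ΨJI') hΦJI ?_,
    fun ν μ => funext fun t => map_add (ΨJI t) _ _,
    fun c ν => funext fun t => map_smul (ΨJI t) _ _,
    fun ν _ => iSup_norm_pullbackField hΦJIsurj ΨJI' ν, ?_, ?_⟩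
  · rintro _ ⟨ω, hω, rfl⟩
    exact ⟨ω, hω, (hpullJI ω hω).symm⟩
  · intro ΦII hΦII hΦIIι ΨII hΨII ν _
    have hΦII_id : ΦII = id := hιId.equalizer hΦII continuous_id (funext hΦIIι)
    refine pullbackField_eq_of_dense (congrFun hΦII_id) (Ψ := fun t => (ΨII t).toLinearIsometry)
      (Ψ' := fun _ => LinearIsometry.id (R := ℂ))
      (dense_eval_image_of_forall_exists_norm_sub_lt hbarI_dense) ?_ ν
    rintro _ ⟨ω, hω, rfl⟩
    exact funext fun t => hΨII t ω hω
  · intro ν _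
    refine pullbackField_eq_of_dense hΦcomp (Ψ := fun t => (ΨKI t).toLinearIsometry)
      (Ψ' := fun t => (ΨJI' t).comp (ΨKJ (ΦJI t)).toLinearIsometry)
      (dense_eval_image_of_forall_exists_norm_sub_lt hbarK_dense) ?_ ν
    rintro _ ⟨ω, hω, rfl⟩
    change pullKI (barK ω) = pullJI (pullKJ (barK ω))
    rw [hpullKI ω hω, hpullKJ ω hω, hpullJI ω hω]

/-- Proposition `systems1`(ii).  With `I ⊆ J ⊆ K` essential
ideals of the Fell algebra `A`, the maps `λ_{JI}ν = (t ↦ Ψ_{JIt}(ν(Φ_{JI}t)))`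
carry `Ω^J` into `Ω^I`, are linear isometries for the supremum norms, satisfy
`λ_{II} = id` and `λ_{KI} = λ_{JI} ∘ λ_{KJ}`; hence `({Ω^I}, {λ_{JI}})` is a
direct system of normed spaces of bounded vector fields and linear isometries. -/
theorem lambda_direct_system
    {T : Type} [TopologicalSpace T] [LocallyCompactSpace T] [T2Space T]
    {H : T → Type} [∀ t, NormedAddCommGroup (H t)] [∀ t, InnerProductSpace ℂ (H t)]
    [∀ t, CompleteSpace (H t)]
    (Ω : Set (∀ t, H t)) (hΩ : IsCtsHilbertBundle Ω)
    (I J K : Set (∀ t, H t →L[ℂ] H t))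
    (hI : IsEssentialIdealOf (FellAlgebra Ω) I)
    (hJ : IsEssentialIdealOf (FellAlgebra Ω) J)
    (hK : IsEssentialIdealOf (FellAlgebra Ω) K)
    (hIJ : I ⊆ J) (hJK : J ⊆ K)
    (hXIJ : (idealSupp I : Set T) ⊆ idealSupp J)
    (hXJK : (idealSupp J : Set T) ⊆ idealSupp K)
    {βXI βXJ βXK : Type}
    [TopologicalSpace βXI] [CompactSpace βXI] [T2Space βXI]
    [TopologicalSpace βXJ] [CompactSpace βXJ] [T2Space βXJ]
    [TopologicalSpace βXK] [CompactSpace βXK] [T2Space βXK]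
    (ιI : idealSupp I → βXI) (hιI : Topology.IsEmbedding ιI) (hιId : DenseRange ιI)
    (ιJ : idealSupp J → βXJ) (hιJ : Topology.IsEmbedding ιJ) (hιJd : DenseRange ιJ)
    (ιK : idealSupp K → βXK) (hιK : Topology.IsEmbedding ιK) (hιKd : DenseRange ιK)
    {HI : βXI → Type} [∀ u, NormedAddCommGroup (HI u)]
    [∀ u, InnerProductSpace ℂ (HI u)] [∀ u, CompleteSpace (HI u)]
    {HJ : βXJ → Type} [∀ u, NormedAddCommGroup (HJ u)]
    [∀ u, InnerProductSpace ℂ (HJ u)] [∀ u, CompleteSpace (HJ u)]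
    {HK : βXK → Type} [∀ u, NormedAddCommGroup (HK u)]
    [∀ u, InnerProductSpace ℂ (HK u)] [∀ u, CompleteSpace (HK u)]
    (barI : (∀ t, H t) → ∀ u, HI u) (barJ : (∀ t, H t) → ∀ u, HJ u)
    (barK : (∀ t, H t) → ∀ u, HK u)
    (hbarI_dense : ∀ (u : βXI) (v : HI u) (ε : ℝ), 0 < ε →
      ∃ ω ∈ boundedFields Ω, ‖barI ω u - v‖ < ε)
    (hbarJ_dense : ∀ (u : βXJ) (v : HJ u) (ε : ℝ), 0 < ε →
      ∃ ω ∈ boundedFields Ω, ‖barJ ω u - v‖ < ε)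
    (hbarK_dense : ∀ (u : βXK) (v : HK u) (ε : ℝ), 0 < ε →
      ∃ ω ∈ boundedFields Ω, ‖barK ω u - v‖ < ε)
    -- the connecting maps `Φ_{JI}`, `Φ_{KJ}`, `Φ_{KI}` (continuous surjections):
    (ΦJI : βXI → βXJ) (hΦJI : Continuous ΦJI) (hΦJIsurj : Function.Surjective ΦJI)
    (hΦJIι : ∀ x : idealSupp I, ΦJI (ιI x) = ιJ (Set.inclusion hXIJ x))
    (ΦKJ : βXJ → βXK) (hΦKJ : Continuous ΦKJ) (hΦKJsurj : Function.Surjective ΦKJ)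
    (hΦKJι : ∀ x : idealSupp J, ΦKJ (ιJ x) = ιK (Set.inclusion hXJK x))
    (ΦKI : βXI → βXK) (hΦKI : Continuous ΦKI) (hΦKIsurj : Function.Surjective ΦKI)
    (hΦKIι : ∀ x : idealSupp I,
      ΦKI (ιI x) = ιK (Set.inclusion (hXIJ.trans hXJK) x))
    (hΦcomp : ∀ t : βXI, ΦKI t = ΦKJ (ΦJI t))
    -- the unitaries `Ψ_{JIt}`, `Ψ_{KJr}`, `Ψ_{KIt}`:
    (ΨJI : ∀ t : βXI, HJ (ΦJI t) ≃ₗᵢ[ℂ] HI t)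
    (ΨKJ : ∀ r : βXJ, HK (ΦKJ r) ≃ₗᵢ[ℂ] HJ r)
    (ΨKI : ∀ t : βXI, HK (ΦKI t) ≃ₗᵢ[ℂ] HI t)
    (hΨJI : ∀ (t : βXI), ∀ ω ∈ boundedFields Ω, ΨJI t (barJ ω (ΦJI t)) = barI ω t)
    (hΨKJ : ∀ (r : βXJ), ∀ ω ∈ boundedFields Ω, ΨKJ r (barK ω (ΦKJ r)) = barJ ω r)
    (hΨKI : ∀ (t : βXI), ∀ ω ∈ boundedFields Ω,
      ΨKI t (barK ω (ΦKI t)) = barI ω t) :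
    -- `λ_{JI}` maps `Ω^J` into `Ω^I` …
    (∀ ν ∈ {ν : ∀ u, HJ u | LocUnifApprox (barJ '' boundedFields Ω) ν},
      (fun t => ΨJI t (ν (ΦJI t))) ∈
        {ν : ∀ u, HI u | LocUnifApprox (barI '' boundedFields Ω) ν}) ∧
    -- … is linear …
    (∀ ν μ : ∀ u, HJ u, (fun t => ΨJI t ((ν + μ) (ΦJI t))) =
      (fun t => ΨJI t (ν (ΦJI t))) + fun t => ΨJI t (μ (ΦJI t))) ∧
    (∀ (c : ℂ) (ν : ∀ u, HJ u), (fun t => ΨJI t ((c • ν) (ΦJI t))) =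
      c • fun t => ΨJI t (ν (ΦJI t))) ∧
    -- … and isometric for the supremum norms:
    (∀ ν ∈ {ν : ∀ u, HJ u | LocUnifApprox (barJ '' boundedFields Ω) ν},
      (⨆ t : βXI, ‖ΨJI t (ν (ΦJI t))‖) = ⨆ r : βXJ, ‖ν r‖) ∧
    -- `λ_{II} = id`:
    (∀ (ΦII : βXI → βXI), Continuous ΦII → (∀ x : idealSupp I, ΦII (ιI x) = ιI x) →
      ∀ (ΨII : ∀ t : βXI, HI (ΦII t) ≃ₗᵢ[ℂ] HI t),
      (∀ (t : βXI), ∀ ω ∈ boundedFields Ω, ΨII t (barI ω (ΦII t)) = barI ω t) →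
      ∀ ν ∈ {ν : ∀ u, HI u | LocUnifApprox (barI '' boundedFields Ω) ν},
        (fun t => ΨII t (ν (ΦII t))) = ν) ∧
    -- `λ_{KI} = λ_{JI} ∘ λ_{KJ}`:
    (∀ ν ∈ {ν : ∀ u, HK u | LocUnifApprox (barK '' boundedFields Ω) ν},
      (fun t => ΨKI t (ν (ΦKI t))) =
        fun t => ΨJI t (ΨKJ (ΦJI t) (ν (ΦKJ (ΦJI t))))) :=
  lambda_direct_system_general Ω I ιI hιId barI barJ barK hbarI_dense hbarK_dense ΦJI hΦJI hΦJIsurj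
    ΦKJ ΦKI hΦcomp ΨJI ΨKJ ΨKI hΨJI hΨKJ hΨKI
end

section
/- Let A be the Fell C*-algebra of a continuous Hilbert bundle over a locally compact Hausdorff space T. Then Ω^Δ is the Banach-space direct limit of the system ({Ω^I}, {λ_{JI}}): for every ξ ∈ Ω^Δ and every ε > 0 there exist an essential ideal I of A and ν ∈ Ω^I such that ‖ξ(s) − (ν∘Φ_I)(s)‖ < ε for every s ∈ Δ; that is, the set {ν∘Φ_I : I an essential ideal of A, ν ∈ Ω^I} is dense in Ω^Δ with respect to the supremum norm. -/
noncomputable section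

variable {T : Type} [TopologicalSpace T] {H : T → Type}
  [∀ t, NormedAddCommGroup (H t)] [∀ t, InnerProductSpace ℂ (H t)]
  [∀ t, CompleteSpace (H t)]

/-- The index set `I_ess(A)` of essential ideals of the Fell algebra of `Ω`
(directed by reverse inclusion). -/
def EssIdeal (Ω : Set (∀ t, H t)) : Type _ :=
  {I : Set (∀ t, H t →L[ℂ] H t) // IsEssentialIdealOf (FellAlgebra Ω) I}

/-- `Ω^I`: the local uniform limits of the induced fields `E^I = bar '' Ω_b`. -/
def OmegaExt {βX : Type} {HI : βX → Type} [TopologicalSpace βX]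
    [∀ u, NormedAddCommGroup (HI u)]
    (Ω : Set (∀ t, H t)) (bar : (∀ t, H t) → ∀ u, HI u) : Set (∀ u, HI u) :=
  {ν | LocUnifApprox (bar '' boundedFields Ω) ν}

end

/-! Every point of `Δ` has a basic neighbourhood `Φ_J⁻¹(V)` on which `ξ` is `ε`-close to the
lift of a single bounded field `w ∈ Ω_b`. By compactness finitely many such neighbourhoods
cover `Δ`, and since essential ideals are closed under intersection they all come from one
`βX^K`. A partition of unity `(f_k)` on the compact space `βX^K` subordinate to this cover
glues the fields `w̄_k` to `ν = ∑ f_k • w̄_k`: near each `u₀` it is uniformly close to the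
element `∑ f_k(u₀) • w̄_k` of `E^K`, so `ν ∈ Ω^K`, and `ξ(s) - (ν∘Φ_K)(s)` is a convex combination
of vectors of norm `< ε`. -/

open Set

theorem locUnifApprox_sum_smul {𝕜 : Type*} [NormedField 𝕜] {X : Type*} [TopologicalSpace X]
    {E : X → Type*} [∀ x, NormedAddCommGroup (E x)] [∀ x, NormedSpace 𝕜 (E x)]
    (S : Submodule 𝕜 (∀ x, E x)) {κ : Type*} [Fintype κ]
    {f : κ → X → 𝕜} (hf : ∀ k, Continuous (f k)) {σ : κ → ∀ x, E x} (hσS : ∀ k, σ k ∈ S)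
    (hσ : ∀ k, ∃ M : ℝ, ∀ x, ‖σ k x‖ ≤ M) :
    LocUnifApprox (S : Set (∀ x, E x)) fun x => ∑ k, f k x • σ k x := by
  intro x₀ δ hδ
  choose M hM using hσ
  let g : X → ℝ := fun x => ∑ k, ‖f k x₀ - f k x‖ * M k
  have hg : Continuous g := by fun_prop
  refine ⟨g ⁻¹' Iio δ, isOpen_Iio.preimage hg, by simpa [g] using hδ,
    ∑ k, f k x₀ • σ k, S.sum_mem fun k _ => S.smul_mem _ (hσS k), fun x hx => ?_⟩
  calc ‖(∑ k, f k x₀ • σ k) x - ∑ k, f k x • σ k x‖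
      = ‖∑ k, (f k x₀ - f k x) • σ k x‖ := by
        simp only [Finset.sum_apply, Pi.smul_apply, sub_smul, Finset.sum_sub_distrib]
    _ ≤ ∑ k, ‖f k x₀ - f k x‖ * ‖σ k x‖ := by
        simpa only [norm_smul] using norm_sum_le Finset.univ fun k => (f k x₀ - f k x) • σ k x
    _ ≤ g x := Finset.sum_le_sum fun k _ => by gcongr; exact hM k x
    _ < δ := hx

theorem PartitionOfUnity.IsSubordinate.norm_sub_finsum_smul_lt {ι X F : Type*}
    [TopologicalSpace X] [SeminormedAddCommGroup F] [NormedSpace ℝ F] {s : Set X}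
    {f : PartitionOfUnity ι X s} {U : ι → Set X} (hf : f.IsSubordinate U) {x : X} (hx : x ∈ s)
    {v : F} {w : ι → F} {δ : ℝ} (hw : ∀ i, x ∈ U i → ‖v - w i‖ < δ) :
    ‖v - ∑ᶠ i, f i x • w i‖ < δ := by
  have hmem := (convex_ball v δ).finsum_mem (z := w) (fun i => f.nonneg i x) (f.sum_eq_one hx)
    fun i hi => by rw [Metric.mem_ball', dist_eq_norm]; exact hw i (hf i (subset_tsupport _ hi))
  rwa [Metric.mem_ball', dist_eq_norm] at hmem

theorem norm_le_of_denseRange_of_inner_self_eq {𝕜 : Type*} [RCLike 𝕜] {X Y Z : Type*}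
    [TopologicalSpace X] {E : X → Type*} [∀ x, NormedAddCommGroup (E x)]
    [∀ x, InnerProductSpace 𝕜 (E x)] {F : Z → Type*} [∀ z, NormedAddCommGroup (F z)]
    [∀ z, InnerProductSpace 𝕜 (F z)] {ι : Y → X} (hι : DenseRange ι) {σ : ∀ x, E x}
    (hσ : Continuous fun x => (inner 𝕜 (σ x) (σ x) : 𝕜)) (g : Y → Z) {τ : ∀ z, F z}
    (hστ : ∀ y, (inner 𝕜 (σ (ι y)) (σ (ι y)) : 𝕜) = inner 𝕜 (τ (g y)) (τ (g y))) {M : ℝ}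
    (hM : ∀ z, ‖τ z‖ ≤ M) (x : X) : ‖σ x‖ ≤ M := by
  have hnorm : Continuous fun x => ‖σ x‖ := by
    simp_rw [norm_eq_sqrt_re_inner (𝕜 := 𝕜)]
    exact (RCLike.continuous_re.comp hσ).sqrt
  refine hι.induction_on x (isClosed_le hnorm continuous_const) fun y => ?_
  rw [norm_eq_sqrt_re_inner (𝕜 := 𝕜), hστ, ← norm_eq_sqrt_re_inner]
  exact hM (g y)

def Submodule.imageOfLinearOn {R M N : Type*} [Semiring R] [AddCommMonoid M] [Module R M]
    [AddCommMonoid N] [Module R N] (P : Submodule R M) (g : M → N)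
    (hadd : ∀ x ∈ P, ∀ y ∈ P, g (x + y) = g x + g y)
    (hsmul : ∀ (c : R), ∀ x ∈ P, g (c • x) = c • g x) : Submodule R N where
  carrier := g '' P
  add_mem' := by
    rintro _ _ ⟨x, hx, rfl⟩ ⟨y, hy, rfl⟩
    exact ⟨x + y, P.add_mem hx hy, hadd x hx y hy⟩
  zero_mem' := ⟨0, P.zero_mem, by simpa using hsmul 0 0 P.zero_mem⟩
  smul_mem' := by
    rintro c _ ⟨x, hx, rfl⟩
    exact ⟨c • x, P.smul_mem c hx, hsmul c x hx⟩

def IsCtsHilbertBundle.boundedSubmodule {T : Type*} [TopologicalSpace T] {H : T → Type*}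
    [∀ t, NormedAddCommGroup (H t)] [∀ t, InnerProductSpace ℂ (H t)] {Ω : Set (∀ t, H t)}
    (hΩ : IsCtsHilbertBundle Ω) : Submodule ℂ (∀ t, H t) where
  carrier := boundedFields Ω
  add_mem' := by
    rintro ω ν ⟨hω, M, hM⟩ ⟨hν, N, hN⟩
    exact ⟨hΩ.add_mem ω hω ν hν, M + N,
      fun t => (norm_add_le _ _).trans (add_le_add (hM t) (hN t))⟩
  zero_mem' := ⟨hΩ.zero_mem, 0, fun t => by simp⟩
  smul_mem' := by
    rintro c ω ⟨hω, M, hM⟩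
    refine ⟨hΩ.smul_mem (ContinuousMap.const T c) ω hω, ‖c‖ * M, fun t => ?_⟩
    simpa only [Pi.smul_apply, norm_smul] using mul_le_mul_of_nonneg_left (hM t) (norm_nonneg c)

section Ideals

variable {T : Type*} {H : T → Type*} [∀ t, NormedAddCommGroup (H t)]
  [∀ t, InnerProductSpace ℂ (H t)] [∀ t, CompleteSpace (H t)]

theorem IsIdealOf.inter {A I J : Set (∀ t, H t →L[ℂ] H t)}
    (hI : IsIdealOf A I) (hJ : IsIdealOf A J) : IsIdealOf A (I ∩ J) where
  subset := fun _ ha => hI.subset ha.1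
  zero_mem := ⟨hI.zero_mem, hJ.zero_mem⟩
  add_mem := fun a ha b hb => ⟨hI.add_mem a ha.1 b hb.1, hJ.add_mem a ha.2 b hb.2⟩
  smul_mem := fun c a ha => ⟨hI.smul_mem c a ha.1, hJ.smul_mem c a ha.2⟩
  star_mem := fun a ha => ⟨hI.star_mem a ha.1, hJ.star_mem a ha.2⟩
  mul_mem_left := fun a ha b hb => ⟨hI.mul_mem_left a ha b hb.1, hJ.mul_mem_left a ha b hb.2⟩
  mul_mem_right := fun a ha b hb => ⟨hI.mul_mem_right a ha.1 b hb, hJ.mul_mem_right a ha.2 b hb⟩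
  norm_closed := fun a ha hap =>
    ⟨hI.norm_closed a ha fun ε hε => (hap ε hε).imp fun _ hb => ⟨hb.1.1, hb.2⟩,
     hJ.norm_closed a ha fun ε hε => (hap ε hε).imp fun _ hb => ⟨hb.1.2, hb.2⟩⟩

theorem IsEssentialIdealOf.inter {A I J : Set (∀ t, H t →L[ℂ] H t)}
    (hI : IsEssentialIdealOf A I) (hJ : IsEssentialIdealOf A J) :
    IsEssentialIdealOf A (I ∩ J) := by
  refine ⟨hI.1.inter hJ.1, fun K hK hKne => ?_⟩
  obtain ⟨c, hcI, hcK, hc0⟩ := hI.2 K hK hKne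
  obtain ⟨d, hdJ, hdIK, hd0⟩ := hJ.2 (I ∩ K) (hI.1.inter hK) ⟨c, ⟨hcI, hcK⟩, hc0⟩
  exact ⟨d, ⟨hdIK.1, hdJ⟩, hdIK.2, hd0⟩

end Ideals

section EssentialIdeals

variable {T : Type} [TopologicalSpace T] {H : T → Type}
  [∀ t, NormedAddCommGroup (H t)] [∀ t, InnerProductSpace ℂ (H t)]
  [∀ t, CompleteSpace (H t)] {Ω : Set (∀ t, H t)}

def EssIdeal.inter (I J : EssIdeal Ω) : EssIdeal Ω :=
  ⟨I.1 ∩ J.1, I.2.inter J.2⟩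

theorem EssIdeal.directed : Directed (· ⊇ ·) fun I : EssIdeal Ω => I.1 :=
  fun I J => ⟨I.inter J, inter_subset_left, inter_subset_right⟩

variable {βX : EssIdeal Ω → Type}
  {HI : ∀ I : EssIdeal Ω, βX I → Type} [∀ I u, NormedAddCommGroup (HI I u)]
  [∀ I u, InnerProductSpace ℂ (HI I u)] {bar : ∀ I : EssIdeal Ω, (∀ t, H t) → ∀ u, HI I u}
  {Δ : Type} {Φ : ∀ I : EssIdeal Ω, Δ → βX I}
  {HΔ : Δ → Type} [∀ s, NormedAddCommGroup (HΔ s)] [∀ s, InnerProductSpace ℂ (HΔ s)]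
  {Ψ : ∀ (I : EssIdeal Ω) (s : Δ), HI I (Φ I s) ≃ₗᵢ[ℂ] HΔ s}

theorem lift_bar_eq_lift_bar
    (hΨcompat : ∀ I J : EssIdeal Ω, I.1 ⊆ J.1 → ∀ (s : Δ), ∀ ω ∈ boundedFields Ω,
      Ψ I s (bar I ω (Φ I s)) = Ψ J s (bar J ω (Φ J s)))
    (I J : EssIdeal Ω) (s : Δ) {ω : ∀ t, H t} (hω : ω ∈ boundedFields Ω) :
    Ψ I s (bar I ω (Φ I s)) = Ψ J s (bar J ω (Φ J s)) :=
  (hΨcompat (I.inter J) I inter_subset_left s ω hω).symm.trans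
    (hΨcompat (I.inter J) J inter_subset_right s ω hω)

variable [∀ I, TopologicalSpace (βX I)] [TopologicalSpace Δ]

theorem exists_isOpen_forall_norm_sub_lift_bar_lt
    (hΦcont : ∀ I, Continuous (Φ I))
    (hbasis : ∀ W : Set Δ, IsOpen W → ∀ s ∈ W, ∃ (I : EssIdeal Ω) (V : Set (βX I)),
      IsOpen V ∧ s ∈ Φ I ⁻¹' V ∧ Φ I ⁻¹' V ⊆ W)
    (hlift : ∀ I J (s : Δ), ∀ ω ∈ boundedFields Ω,
      Ψ I s (bar I ω (Φ I s)) = Ψ J s (bar J ω (Φ J s)))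
    {ξ : ∀ s, HΔ s}
    (hξ : LocUnifApprox {μ : ∀ s, HΔ s | ∃ (I : EssIdeal Ω) (ν : ∀ u, HI I u),
      ν ∈ OmegaExt Ω (bar I) ∧ μ = fun s => Ψ I s (ν (Φ I s))} ξ)
    {ε : ℝ} (hε : 0 < ε) (s₀ : Δ) :
    ∃ (J : EssIdeal Ω) (V : Set (βX J)) (w : ∀ t, H t), w ∈ boundedFields Ω ∧ IsOpen V ∧
      Φ J s₀ ∈ V ∧ ∀ s, Φ J s ∈ V → ∀ I, ‖ξ s - Ψ I s (bar I w (Φ I s))‖ < ε := by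
  obtain ⟨U, hUo, hs₀U, _, ⟨I, ν, hν, rfl⟩, hUν⟩ := hξ s₀ (ε / 2) (half_pos hε)
  obtain ⟨V, hVo, hs₀V, _, ⟨w, hw, rfl⟩, hVw⟩ := hν (Φ I s₀) (ε / 2) (half_pos hε)
  obtain ⟨J, V', hV'o, hs₀V', hV'sub⟩ :=
    hbasis (U ∩ Φ I ⁻¹' V) (hUo.inter (hVo.preimage (hΦcont I))) s₀ ⟨hs₀U, hs₀V⟩
  refine ⟨J, V', w, hw, hV'o, hs₀V', fun s hs I' => ?_⟩
  obtain ⟨hsU, hsV⟩ := hV'sub hs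
  rw [hlift I' I s w hw]
  calc ‖ξ s - Ψ I s (bar I w (Φ I s))‖
      ≤ ‖ξ s - Ψ I s (ν (Φ I s))‖ + ‖Ψ I s (ν (Φ I s)) - Ψ I s (bar I w (Φ I s))‖ :=
        norm_sub_le_norm_sub_add_norm_sub _ _ _
    _ < ε / 2 + ε / 2 := by
        gcongr
        · rw [norm_sub_rev]; exact hUν s hsU
        · rw [← map_sub, LinearIsometryEquiv.norm_map, norm_sub_rev]; exact hVw _ hsV
    _ = ε := add_halves ε

theorem exists_finset_essIdeal_forall_mem_preimage [Nonempty (EssIdeal Ω)] [CompactSpace Δ]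
    (Φmap : ∀ I J : EssIdeal Ω, I.1 ⊆ J.1 → βX I → βX J)
    (hΦcont : ∀ I, Continuous (Φ I)) (hΦsurj : ∀ I, Function.Surjective (Φ I))
    (hΦcompat : ∀ I J (h : I.1 ⊆ J.1) (s : Δ), Φmap I J h (Φ I s) = Φ J s)
    {J : Δ → EssIdeal Ω} {V : ∀ s, Set (βX (J s))} (hVo : ∀ s, IsOpen (V s))
    (hsV : ∀ s, Φ (J s) s ∈ V s) :
    ∃ (t : Finset Δ) (K : EssIdeal Ω) (hKJ : ∀ s ∈ t, K.1 ⊆ (J s).1),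
      ∀ u, ∃ s, ∃ hs : s ∈ t, Φmap K (J s) (hKJ s hs) u ∈ V s := by
  classical
  obtain ⟨t, ht⟩ := isCompact_univ.elim_finite_subcover (fun s => Φ (J s) ⁻¹' V s)
    (fun s => (hVo s).preimage (hΦcont _)) fun s _ => mem_iUnion.2 ⟨s, hsV s⟩
  obtain ⟨K, hK⟩ := EssIdeal.directed.finset_le (t.image J)
  have hKJ : ∀ s ∈ t, K.1 ⊆ (J s).1 := fun s hs => hK _ (Finset.mem_image_of_mem J hs)
  refine ⟨t, K, hKJ, fun u => ?_⟩
  obtain ⟨s', rfl⟩ := hΦsurj K u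
  obtain ⟨s, hs, hs'⟩ := mem_iUnion₂.1 (ht (mem_univ s'))
  exact ⟨s, hs, by rwa [hΦcompat]⟩

end EssentialIdeals

theorem omegaDelta_eq_banach_direct_limit_general
    {T : Type} [TopologicalSpace T]
    {H : T → Type} [∀ t, NormedAddCommGroup (H t)] [∀ t, InnerProductSpace ℂ (H t)]
    [∀ t, CompleteSpace (H t)]
    (Ω : Set (∀ t, H t)) (hΩ : IsCtsHilbertBundle Ω)
    -- Stone–Čech data over every essential ideal:
    {βX : EssIdeal Ω → Type} [∀ I, TopologicalSpace (βX I)]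
    [∀ I, CompactSpace (βX I)] [∀ I, T2Space (βX I)]
    (ι : ∀ I : EssIdeal Ω, idealSupp I.1 → βX I)
    (hιd : ∀ I, DenseRange (ι I))
    {HI : ∀ I : EssIdeal Ω, βX I → Type}
    [∀ I u, NormedAddCommGroup (HI I u)] [∀ I u, InnerProductSpace ℂ (HI I u)]
    (bar : ∀ I : EssIdeal Ω, (∀ t, H t) → ∀ u, HI I u)
    (hbar_add : ∀ I, ∀ ω ∈ boundedFields Ω, ∀ ν ∈ boundedFields Ω,
      bar I (ω + ν) = bar I ω + bar I ν)
    (hbar_smul : ∀ I, ∀ (c : ℂ), ∀ ω ∈ boundedFields Ω, bar I (c • ω) = c • bar I ω)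
    (hbar_inner_cont : ∀ I, ∀ ω ∈ boundedFields Ω, ∀ ν ∈ boundedFields Ω,
      Continuous fun u => (inner ℂ (bar I ω u) (bar I ν u) : ℂ))
    (hbar_inner_eq : ∀ I, ∀ ω ∈ boundedFields Ω, ∀ ν ∈ boundedFields Ω,
      ∀ x : idealSupp I.1, (inner ℂ (bar I ω (ι I x)) (bar I ν (ι I x)) : ℂ) =
        (inner ℂ (ω x.1) (ν x.1) : ℂ))
    -- the connecting maps `Φ_{JI} : βX^I → βX^J` (for `I ⊆ J`):
    (Φmap : ∀ I J : EssIdeal Ω, I.1 ⊆ J.1 → βX I → βX J)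
    (hΦmap_cont : ∀ I J h, Continuous (Φmap I J h))
    -- the inverse limit `Δ = lim← βX^I` with canonical surjections `Φ_I`:
    {Δ : Type} [TopologicalSpace Δ] [CompactSpace Δ]
    (Φ : ∀ I : EssIdeal Ω, Δ → βX I)
    (hΦcont : ∀ I, Continuous (Φ I)) (hΦsurj : ∀ I, Function.Surjective (Φ I))
    (hΦcompat : ∀ I J (h : I.1 ⊆ J.1) (s : Δ), Φmap I J h (Φ I s) = Φ J s)
    (hΦlim : ∀ x : ∀ I : EssIdeal Ω, βX I,
      (∀ I J (h : I.1 ⊆ J.1), Φmap I J h (x I) = x J) → ∃ s : Δ, ∀ I, Φ I s = x I)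
    (hbasis : ∀ W : Set Δ, IsOpen W → ∀ s ∈ W, ∃ (I : EssIdeal Ω) (V : Set (βX I)),
      IsOpen V ∧ s ∈ Φ I ⁻¹' V ∧ Φ I ⁻¹' V ⊆ W)
    -- the limit fibres `H_s^Δ` with canonical unitaries `Ψ_{I,s}`:
    {HΔ : Δ → Type} [∀ s, NormedAddCommGroup (HΔ s)]
    [∀ s, InnerProductSpace ℂ (HΔ s)]
    (Ψ : ∀ (I : EssIdeal Ω) (s : Δ), HI I (Φ I s) ≃ₗᵢ[ℂ] HΔ s)
    (hΨcompat : ∀ I J (h : I.1 ⊆ J.1) (s : Δ), ∀ ω ∈ boundedFields Ω,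
      Ψ I s (bar I ω (Φ I s)) = Ψ J s (bar J ω (Φ J s))) :
    -- conclusion:
    ∀ ξ ∈ {ξ : ∀ s, HΔ s | (∃ M : ℝ, ∀ s, ‖ξ s‖ ≤ M) ∧
        LocUnifApprox
          {μ : ∀ s, HΔ s | ∃ (I : EssIdeal Ω) (ν : ∀ u, HI I u),
            ν ∈ OmegaExt Ω (bar I) ∧ μ = fun s => Ψ I s (ν (Φ I s))} ξ},
      ∀ ε : ℝ, 0 < ε →
        ∃ (I : EssIdeal Ω) (ν : ∀ u, HI I u), ν ∈ OmegaExt Ω (bar I) ∧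
          ∀ s : Δ, ‖ξ s - Ψ I s (ν (Φ I s))‖ < ε := by
  rintro ξ ⟨-, hξ⟩ ε hε
  -- Without essential ideals the inverse system is empty, so `Δ` has a point, and the local
  -- approximant of `ξ` at that point comes with an essential ideal.
  have : Nonempty (EssIdeal Ω) := by
    by_contra hempty
    rw [not_nonempty_iff] at hempty
    obtain ⟨s, -⟩ := hΦlim isEmptyElim fun I => isEmptyElim I
    obtain ⟨-, -, -, -, ⟨I, -⟩, -⟩ := hξ s 1 one_pos
    exact isEmptyElim I
  choose J V w hw hVo hs₀V hVw using exists_isOpen_forall_norm_sub_lift_bar_lt hΦcont hbasis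
    (lift_bar_eq_lift_bar hΨcompat) hξ hε
  obtain ⟨t, K, hKJ, hcover⟩ :=
    exists_finset_essIdeal_forall_mem_preimage Φmap hΦcont hΦsurj hΦcompat hVo hs₀V
  let U (k : t) : Set (βX K) := Φmap K (J k) (hKJ k k.2) ⁻¹' V k
  obtain ⟨f, hf⟩ := PartitionOfUnity.exists_isSubordinate isClosed_univ U
    (fun k => (hVo k).preimage (hΦmap_cont _ _ _)) fun u _ => by
      obtain ⟨s, hs, hu⟩ := hcover u
      exact mem_iUnion.2 ⟨⟨s, hs⟩, hu⟩
  refine ⟨K, fun u => ∑ k : t, f k u • bar K (w k) u, ?_, fun s => ?_⟩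
  · exact locUnifApprox_sum_smul
      ((hΩ.boundedSubmodule.imageOfLinearOn (bar K) (hbar_add K) (hbar_smul K)).restrictScalars ℝ)
      (fun k => (f k).continuous) (fun k => ⟨w k, hw k, rfl⟩) fun k =>
        (hw k).2.imp fun _ => norm_le_of_denseRange_of_inner_self_eq (hιd K)
          (hbar_inner_cont K _ (hw k) _ (hw k)) Subtype.val (hbar_inner_eq K _ (hw k) _ (hw k))
  · have hΨsmul (r : ℝ) v : Ψ K s (r • v) = r • Ψ K s v :=
      (Ψ K s).toLinearEquiv.toLinearMap.map_smul_of_tower r v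
    simp only [map_sum, hΨsmul]
    rw [← finsum_eq_sum_of_fintype]
    refine hf.norm_sub_finsum_smul_lt (mem_univ _) fun k hk => hVw k s ?_ K
    rwa [← hΦcompat K (J k) (hKJ k k.2)]

/-- Theorem `omega limit`.  `Ω^Δ = lim→ Ω^I` as a Banach
space: every `ξ ∈ Ω^Δ` is a *global* uniform limit of fields `ν∘Φ_I`; that is,
`{ν∘Φ_I : I essential, ν ∈ Ω^I}` is dense in `Ω^Δ` in the supremum norm. -/
theorem omegaDelta_eq_banach_direct_limit
    {T : Type} [TopologicalSpace T] [LocallyCompactSpace T] [T2Space T]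
    {H : T → Type} [∀ t, NormedAddCommGroup (H t)] [∀ t, InnerProductSpace ℂ (H t)]
    [∀ t, CompleteSpace (H t)]
    (Ω : Set (∀ t, H t)) (hΩ : IsCtsHilbertBundle Ω)
    -- Stone–Čech data over every essential ideal:
    {βX : EssIdeal Ω → Type} [∀ I, TopologicalSpace (βX I)]
    [∀ I, CompactSpace (βX I)] [∀ I, T2Space (βX I)]
    (ι : ∀ I : EssIdeal Ω, idealSupp I.1 → βX I)
    (hι : ∀ I, Topology.IsEmbedding (ι I)) (hιd : ∀ I, DenseRange (ι I))
    {HI : ∀ I : EssIdeal Ω, βX I → Type}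
    [∀ I u, NormedAddCommGroup (HI I u)] [∀ I u, InnerProductSpace ℂ (HI I u)]
    [∀ I u, CompleteSpace (HI I u)]
    (bar : ∀ I : EssIdeal Ω, (∀ t, H t) → ∀ u, HI I u)
    (hbar_add : ∀ I, ∀ ω ∈ boundedFields Ω, ∀ ν ∈ boundedFields Ω,
      bar I (ω + ν) = bar I ω + bar I ν)
    (hbar_smul : ∀ I, ∀ (c : ℂ), ∀ ω ∈ boundedFields Ω, bar I (c • ω) = c • bar I ω)
    (hbar_inner_cont : ∀ I, ∀ ω ∈ boundedFields Ω, ∀ ν ∈ boundedFields Ω,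
      Continuous fun u => (inner ℂ (bar I ω u) (bar I ν u) : ℂ))
    (hbar_inner_eq : ∀ I, ∀ ω ∈ boundedFields Ω, ∀ ν ∈ boundedFields Ω,
      ∀ x : idealSupp I.1, (inner ℂ (bar I ω (ι I x)) (bar I ν (ι I x)) : ℂ) =
        (inner ℂ (ω x.1) (ν x.1) : ℂ))
    (hbar_dense : ∀ I (u : βX I) (v : HI I u) (ε : ℝ), 0 < ε →
      ∃ ω ∈ boundedFields Ω, ‖bar I ω u - v‖ < ε)
    -- the connecting maps `Φ_{JI} : βX^I → βX^J` (for `I ⊆ J`):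
    (hXmono : ∀ I J : EssIdeal Ω, I.1 ⊆ J.1 →
      (idealSupp I.1 : Set T) ⊆ idealSupp J.1)
    (Φmap : ∀ I J : EssIdeal Ω, I.1 ⊆ J.1 → βX I → βX J)
    (hΦmap_cont : ∀ I J h, Continuous (Φmap I J h))
    (hΦmap_ι : ∀ I J (h : I.1 ⊆ J.1) (x : idealSupp I.1),
      Φmap I J h (ι I x) = ι J (Set.inclusion (hXmono I J h) x))
    -- the inverse limit `Δ = lim← βX^I` with canonical surjections `Φ_I`:
    {Δ : Type} [TopologicalSpace Δ] [CompactSpace Δ] [T2Space Δ]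
    (Φ : ∀ I : EssIdeal Ω, Δ → βX I)
    (hΦcont : ∀ I, Continuous (Φ I)) (hΦsurj : ∀ I, Function.Surjective (Φ I))
    (hΦcompat : ∀ I J (h : I.1 ⊆ J.1) (s : Δ), Φmap I J h (Φ I s) = Φ J s)
    (hΦsep : ∀ s s' : Δ, (∀ I, Φ I s = Φ I s') → s = s')
    (hΦlim : ∀ x : ∀ I : EssIdeal Ω, βX I,
      (∀ I J (h : I.1 ⊆ J.1), Φmap I J h (x I) = x J) → ∃ s : Δ, ∀ I, Φ I s = x I)
    (hbasis : ∀ W : Set Δ, IsOpen W → ∀ s ∈ W, ∃ (I : EssIdeal Ω) (V : Set (βX I)),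
      IsOpen V ∧ s ∈ Φ I ⁻¹' V ∧ Φ I ⁻¹' V ⊆ W)
    -- the limit fibres `H_s^Δ` with canonical unitaries `Ψ_{I,s}`:
    {HΔ : Δ → Type} [∀ s, NormedAddCommGroup (HΔ s)]
    [∀ s, InnerProductSpace ℂ (HΔ s)] [∀ s, CompleteSpace (HΔ s)]
    (Ψ : ∀ (I : EssIdeal Ω) (s : Δ), HI I (Φ I s) ≃ₗᵢ[ℂ] HΔ s)
    (hΨcompat : ∀ I J (h : I.1 ⊆ J.1) (s : Δ), ∀ ω ∈ boundedFields Ω,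
      Ψ I s (bar I ω (Φ I s)) = Ψ J s (bar J ω (Φ J s)))
    (hΨdense : ∀ (s : Δ) (v : HΔ s) (ε : ℝ), 0 < ε →
      ∃ (I : EssIdeal Ω) (ν : ∀ u, HI I u), ν ∈ OmegaExt Ω (bar I) ∧
        ‖Ψ I s (ν (Φ I s)) - v‖ < ε) :
    -- conclusion:
    ∀ ξ ∈ {ξ : ∀ s, HΔ s | (∃ M : ℝ, ∀ s, ‖ξ s‖ ≤ M) ∧
        LocUnifApprox
          {μ : ∀ s, HΔ s | ∃ (I : EssIdeal Ω) (ν : ∀ u, HI I u),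
            ν ∈ OmegaExt Ω (bar I) ∧ μ = fun s => Ψ I s (ν (Φ I s))} ξ},
      ∀ ε : ℝ, 0 < ε →
        ∃ (I : EssIdeal Ω) (ν : ∀ u, HI I u), ν ∈ OmegaExt Ω (bar I) ∧
          ∀ s : Δ, ‖ξ s - Ψ I s (ν (Φ I s))‖ < ε :=
  omegaDelta_eq_banach_direct_limit_general Ω hΩ ι hιd bar hbar_add hbar_smul hbar_inner_cont
    hbar_inner_eq Φmap hΦmap_cont Φ hΦcont hΦsurj hΦcompat hΦlim hbasis Ψ hΨcompat
end
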